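/- arXiv:2207.07470 — 5 statements merged into one kernel-verified Lean document; each statement's English description precedes it below -/
import Mathlib

section
/- Let g : ℝᵐ → ℝ ∪ {∞} be a proper convex function whose epigraph is a polyhedral convex set, let z̄ ∈ dom g and λ̄ ∈ ∂g(z̄). Then λ̄ ∈ ri ∂g(z̄) (the relative interior of the subdifferential) if and only if the critical cone K_g(z̄,λ̄) := {w ∈ ℝᵐ | dg(z̄)(w) = ⟨λ̄, w⟩} is a linear subspace of ℝᵐ. -/
/-!
Near `(z̄, g z̄)` the polyhedral epigraph is cut out by finitely many linear inequalities
`⟪aᵢ, u⟫ + cᵢ s ≤ γᵢ` with `γᵢ ≥ 0` and `cᵢ ≤ 0`. Only the active ones (`γᵢ = 0`) matter for the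
subderivative, and each of them produces a subgradient (`(-cᵢ)⁻¹ • aᵢ`, or `λ̄ + aᵢ` when
`cᵢ = 0`); this identifies the critical cone `K_g(z̄, λ̄)` with the normal cone to `∂g(z̄)` at `λ̄`.
For a closed convex set `C` in finite dimension, `x ∈ ri C` iff `N_C(x)` is a subspace: at a
relative interior point `N_C(x)` is the orthogonal complement of the direction of `aff C`, while
at a relative boundary point, limits of unit vectors separating nearby points of `aff C \ C` give
a unit normal `v` in that direction, and `-v ∈ N_C(x)` would force `v ⊥ aff C`.
-/

open Filter Topology Set Metric

noncomputable section

/-- A polyhedral convex set: a finite intersection of closed half-spaces. -/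
def IsPolyhedralSet {E : Type*} [AddCommGroup E] [Module ℝ E] (C : Set E) : Prop :=
  ∃ (s : ℕ) (b : Fin s → (E →ₗ[ℝ] ℝ)) (β : Fin s → ℝ), C = {x | ∀ i, b i x ≤ β i}

/-- A polyhedral function: proper (never `⊥`, somewhere finite) with polyhedral epigraph. -/
def IsPolyhedralFn {E : Type*} [AddCommGroup E] [Module ℝ E] (g : E → EReal) : Prop :=
  (∃ z, g z ≠ ⊤) ∧ (∀ z, g z ≠ ⊥) ∧
    IsPolyhedralSet {p : E × ℝ | g p.1 ≤ (p.2 : EReal)}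

/-- Tangent cone to a convex set: closure of the cone of feasible directions. -/
def tcone {E : Type*} [NormedAddCommGroup E] [NormedSpace ℝ E] (C : Set E) (x : E) : Set E :=
  closure {w | ∃ t : ℝ, 0 < t ∧ x + t • w ∈ C}

/-- Convex subdifferential of an extended-real-valued function. -/
def subdiff {E : Type*} [NormedAddCommGroup E] [InnerProductSpace ℝ E]
    (g : E → EReal) (z : E) : Set E :=
  {v | ∀ x, g z + ((inner ℝ v (x - z) : ℝ) : EReal) ≤ g x}

/-- Subderivative: `dg(z)(w) = liminf_{t↓0, w'→w} (g(z+tw')-g(z))/t`. -/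
def subderiv {E : Type*} [NormedAddCommGroup E] [NormedSpace ℝ E]
    (g : E → EReal) (z : E) (w : E) : EReal :=
  Filter.liminf (fun p : ℝ × E => (g (z + p.1 • p.2) - g z) * (((p.1)⁻¹ : ℝ) : EReal))
    ((nhdsWithin 0 (Set.Ioi (0 : ℝ))) ×ˢ 𝓝 w)

/-- Critical cone `K_g(z,v) = {w | dg(z)(w) = ⟨v,w⟩}`. -/
def Kcone {E : Type*} [NormedAddCommGroup E] [InnerProductSpace ℝ E]
    (g : E → EReal) (z v : E) : Set E :=
  {w | subderiv g z w = ((inner ℝ v w : ℝ) : EReal)}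

/-- Normal cone of convex analysis. -/
def ncone {E : Type*} [NormedAddCommGroup E] [InnerProductSpace ℝ E]
    (C : Set E) (x : E) : Set E :=
  {v | ∀ y ∈ C, (inner ℝ v (y - x) : ℝ) ≤ 0}

/-- A set is a linear subspace. -/
def IsLinSubspace {E : Type*} [AddCommGroup E] [Module ℝ E] (K : Set E) : Prop :=
  ∃ S : Submodule ℝ E, K = ↑S

/-- Polar cone. -/
def polarCone {E : Type*} [NormedAddCommGroup E] [InnerProductSpace ℝ E] (K : Set E) : Set E :=
  {u | ∀ w ∈ K, (inner ℝ u w : ℝ) ≤ 0}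

/-- Fenchel conjugate. -/
def fconj {E : Type*} [NormedAddCommGroup E] [InnerProductSpace ℝ E]
    (g : E → EReal) (v : E) : EReal :=
  ⨆ z, ((inner ℝ v z : ℝ) : EReal) - g z

/-- Bouligand (contingent) tangent cone, via sequences. -/
def btcone {E : Type*} [NormedAddCommGroup E] [NormedSpace ℝ E] (Ω : Set E) (x : E) : Set E :=
  {w | ∃ (t : ℕ → ℝ) (v : ℕ → E), (∀ n, 0 < t n) ∧ Tendsto t atTop (𝓝 0) ∧
      Tendsto v atTop (𝓝 w) ∧ ∀ n, x + t n • v n ∈ Ω}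

/-- Clarke (regular) tangent cone, via sequences. -/
def clarkeT {E : Type*} [NormedAddCommGroup E] [NormedSpace ℝ E] (Ω : Set E) (xb : E) : Set E :=
  {w | ∀ (x : ℕ → E) (t : ℕ → ℝ), (∀ n, x n ∈ Ω) → Tendsto x atTop (𝓝 xb) →
      (∀ n, 0 < t n) → Tendsto t atTop (𝓝 0) →
      ∃ v : ℕ → E, Tendsto v atTop (𝓝 w) ∧ ∀ n, x n + t n • v n ∈ Ω}

/-- Paratingent cone, via sequences. -/
def paraT {E : Type*} [NormedAddCommGroup E] [NormedSpace ℝ E] (Ω : Set E) (xb : E) : Set E :=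
  {w | ∃ (x : ℕ → E) (t : ℕ → ℝ) (v : ℕ → E), (∀ n, x n ∈ Ω) ∧ Tendsto x atTop (𝓝 xb) ∧
      (∀ n, 0 < t n) ∧ Tendsto t atTop (𝓝 0) ∧ Tendsto v atTop (𝓝 w) ∧
      ∀ n, x n + t n • v n ∈ Ω}

open scoped RealInnerProductSpace

section RelativeInterior

variable {E : Type*} [NormedAddCommGroup E] [InnerProductSpace ℝ E] {C : Set E} {x : E}

lemma mem_intrinsicInterior_iff_ball (hx : x ∈ C) :
    x ∈ intrinsicInterior ℝ C ↔
      ∃ ε > 0, ∀ y ∈ (affineSpan ℝ C : Set E), dist y x < ε → y ∈ C := by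
  rw [mem_intrinsicInterior]
  constructor
  · rintro ⟨y, hy, rfl⟩
    obtain ⟨ε, hε, hball⟩ := Metric.mem_nhds_iff.1 (mem_interior_iff_mem_nhds.1 hy)
    exact ⟨ε, hε, fun z hz hzx => hball (show (⟨z, hz⟩ : affineSpan ℝ C) ∈ ball y ε from hzx)⟩
  · rintro ⟨ε, hε, h⟩
    refine ⟨⟨x, subset_affineSpan ℝ C hx⟩, ?_, rfl⟩
    exact mem_interior_iff_mem_nhds.2 <| Metric.mem_nhds_iff.2 ⟨ε, hε, fun z hz => h z z.2 hz⟩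

lemma exists_pos_add_smul_mem_of_mem_intrinsicInterior (hx : x ∈ intrinsicInterior ℝ C)
    {d : E} (hd : d ∈ (affineSpan ℝ C).direction) :
    ∃ t : ℝ, 0 < t ∧ x + t • d ∈ C := by
  obtain ⟨ε, hε, hball⟩ := (mem_intrinsicInterior_iff_ball (intrinsicInterior_subset hx)).1 hx
  have hlim : Tendsto (fun t : ℝ => x + t • d) (𝓝[>] 0) (𝓝 x) :=
    ((continuous_const.add (continuous_id.smul continuous_const)).tendsto' 0 x
      (by simp)).mono_left nhdsWithin_le_nhds
  obtain ⟨t, htε, ht⟩ :=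
    ((hlim.eventually (ball_mem_nhds x hε)).and self_mem_nhdsWithin).exists
  refine ⟨t, ht, hball _ ?_ htε⟩
  rw [SetLike.mem_coe, add_comm]
  exact AffineSubspace.vadd_mem_of_mem_direction ((affineSpan ℝ C).direction.smul_mem t hd)
    (subset_affineSpan ℝ C (intrinsicInterior_subset hx))

lemma ncone_eq_orthogonal_of_mem_intrinsicInterior (hx : x ∈ intrinsicInterior ℝ C) :
    ncone C x = ((affineSpan ℝ C).directionᗮ : Set E) := by
  ext v
  refine ⟨fun hv => ?_, fun hv y hy => ?_⟩
  · refine (Submodule.mem_orthogonal' _ v).2 fun d hd => le_antisymm ?_ ?_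
    · obtain ⟨t, ht, hxt⟩ := exists_pos_add_smul_mem_of_mem_intrinsicInterior hx hd
      have := hv _ hxt
      rw [add_sub_cancel_left, inner_smul_right] at this
      exact nonpos_of_mul_nonpos_right this ht
    · obtain ⟨t, ht, hxt⟩ := exists_pos_add_smul_mem_of_mem_intrinsicInterior hx
        ((affineSpan ℝ C).direction.neg_mem hd)
      have := hv _ hxt
      rw [add_sub_cancel_left, inner_smul_right, inner_neg_right] at this
      exact neg_nonpos.1 (nonpos_of_mul_nonpos_right this ht)
  · exact ((Submodule.mem_orthogonal' _ v).1 hv _ <| AffineSubspace.vsub_mem_direction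
      (subset_affineSpan ℝ C hy) (subset_affineSpan ℝ C (intrinsicInterior_subset hx))).le

lemma eq_zero_of_mem_direction_of_inner_sub_eq_zero {v : E}
    (hv : v ∈ (affineSpan ℝ C).direction) (h : ∀ a ∈ C, ∀ b ∈ C, ⟪v, a - b⟫ = 0) :
    v = 0 := by
  have hspan : (affineSpan ℝ C).direction ≤ (ℝ ∙ v)ᗮ := by
    rw [direction_affineSpan, vectorSpan_def, Submodule.span_le]
    rintro _ ⟨a, ha, b, hb, rfl⟩
    exact (Submodule.mem_orthogonal_singleton_iff_inner_right).2 (h a ha b hb)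
  exact inner_self_eq_zero.1 ((Submodule.mem_orthogonal_singleton_iff_inner_right).1 (hspan hv))

lemma exists_unit_inner_sub_neg_of_notMem [FiniteDimensional ℝ E] (hconv : Convex ℝ C)
    (hclosed : IsClosed C) {y : E} (hy : y ∈ affineSpan ℝ C) (hyC : y ∉ C) :
    ∃ u ∈ (affineSpan ℝ C).direction, ‖u‖ = 1 ∧ ∀ a ∈ C, ⟪u, a - y⟫ < 0 := by
  set D := (affineSpan ℝ C).direction
  obtain ⟨f, s, hfC, hfy⟩ := geometric_hahn_banach_closed_point hconv hclosed hyC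
  set v := (InnerProductSpace.toDual ℝ E).symm f
  have hu : ∀ a ∈ C, ⟪D.starProjection v, a - y⟫ < 0 := by
    intro a ha
    have hay : a - y ∈ D := AffineSubspace.vsub_mem_direction (subset_affineSpan ℝ C ha) hy
    rw [Submodule.inner_starProjection_left_eq_right, D.starProjection_eq_self_iff.2 hay,
      InnerProductSpace.toDual_symm_apply, map_sub]
    linarith [hfC a ha]
  obtain ⟨a, ha⟩ := (affineSpan_nonempty ℝ).1 ⟨y, hy⟩
  have hu0 : D.starProjection v ≠ 0 := fun h => by simpa [h] using hu a ha
  refine ⟨‖D.starProjection v‖⁻¹ • D.starProjection v,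
    D.smul_mem _ (D.starProjection_apply_mem _), norm_smul_inv_norm hu0, fun b hb => ?_⟩
  rw [inner_smul_left, RCLike.conj_to_real]
  exact mul_neg_of_pos_of_neg (inv_pos.2 (norm_pos_iff.2 hu0)) (hu b hb)

lemma exists_unit_mem_ncone_of_notMem_intrinsicInterior [FiniteDimensional ℝ E]
    (hconv : Convex ℝ C) (hclosed : IsClosed C) (hx : x ∈ C)
    (hri : x ∉ intrinsicInterior ℝ C) :
    ∃ v ∈ (affineSpan ℝ C).direction, ‖v‖ = 1 ∧ v ∈ ncone C x := by
  set D := (affineSpan ℝ C).direction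
  rw [mem_intrinsicInterior_iff_ball hx] at hri
  push Not at hri
  choose y hyC hyx hy using fun n : ℕ => hri (1 / (n + 1)) Nat.one_div_pos_of_nat
  have hy_lim : Tendsto y atTop (𝓝 x) :=
    tendsto_iff_dist_tendsto_zero.2 <| squeeze_zero (fun _ => dist_nonneg)
      (fun n => (hyx n).le) tendsto_one_div_add_atTop_nhds_zero_nat
  choose u huD hu1 hu using fun n => exists_unit_inner_sub_neg_of_notMem hconv hclosed
    (hyC n) (hy n)
  have hK : IsCompact (sphere (0 : E) 1 ∩ D) :=
    (isCompact_sphere 0 1).inter_right D.closed_of_finiteDimensional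
  obtain ⟨v, ⟨hv1, hvD⟩, φ, hφ, hv⟩ :=
    hK.tendsto_subseq fun n => ⟨mem_sphere_zero_iff_norm.2 (hu1 n), huD n⟩
  refine ⟨v, hvD, mem_sphere_zero_iff_norm.1 hv1, fun a ha => ?_⟩
  exact le_of_tendsto (hv.inner (tendsto_const_nhds.sub (hy_lim.comp hφ.tendsto_atTop)))
    (Eventually.of_forall fun k => (hu (φ k) a ha).le)

theorem mem_intrinsicInterior_iff_isLinSubspace_ncone [FiniteDimensional ℝ E]
    (hconv : Convex ℝ C) (hclosed : IsClosed C) (hx : x ∈ C) :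
    x ∈ intrinsicInterior ℝ C ↔ IsLinSubspace (ncone C x) := by
  refine ⟨fun hri => ⟨_, ncone_eq_orthogonal_of_mem_intrinsicInterior hri⟩, ?_⟩
  rintro ⟨S, hS⟩
  by_contra hri
  obtain ⟨v, hvD, hv1, hvN⟩ :=
    exists_unit_mem_ncone_of_notMem_intrinsicInterior hconv hclosed hx hri
  have hvN' : -v ∈ ncone C x := by rw [hS] at hvN ⊢; exact S.neg_mem hvN
  have hperp : ∀ a ∈ C, ⟪v, a - x⟫ = 0 := fun a ha =>
    le_antisymm (hvN a ha) (by simpa [inner_neg_left] using hvN' a ha)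
  have hv0 : v = 0 := eq_zero_of_mem_direction_of_inner_sub_eq_zero hvD fun a ha b hb => by
    rw [show a - b = (a - x) - (b - x) by abel, inner_sub_right, hperp a ha, hperp b hb, sub_zero]
  simp [hv0] at hv1

end RelativeInterior

namespace EReal

lemma sub_coe_mul_inv_le_iff {y : EReal} {r s t : ℝ} (ht : 0 < t) :
    (y - r) * ((t⁻¹ : ℝ) : EReal) ≤ s ↔ y ≤ ((r + t * s : ℝ) : EReal) := by
  have ht' : (0 : EReal) < (t⁻¹ : ℝ) := EReal.coe_pos.2 (inv_pos.2 ht)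
  induction y using EReal.rec with
  | bot => simp [bot_mul_of_pos ht', -EReal.coe_add, -EReal.coe_mul]
  | top => simp [top_mul_of_pos ht', -EReal.coe_add, -EReal.coe_mul]
  | coe y =>
    rw [← EReal.coe_sub, ← EReal.coe_mul, EReal.coe_le_coe_iff, EReal.coe_le_coe_iff,
      ← div_eq_mul_inv, div_le_iff₀ ht]
    constructor <;> intro h <;> linarith

lemma le_sub_coe_mul_inv_iff {y : EReal} {r s t : ℝ} (ht : 0 < t) :
    (s : EReal) ≤ (y - r) * ((t⁻¹ : ℝ) : EReal) ↔ ((r + t * s : ℝ) : EReal) ≤ y := by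
  have ht' : (0 : EReal) < (t⁻¹ : ℝ) := EReal.coe_pos.2 (inv_pos.2 ht)
  induction y using EReal.rec with
  | bot => simp [bot_mul_of_pos ht', -EReal.coe_add, -EReal.coe_mul]
  | top => simp [top_mul_of_pos ht', -EReal.coe_add, -EReal.coe_mul]
  | coe y =>
    rw [← EReal.coe_sub, ← EReal.coe_mul, EReal.coe_le_coe_iff, EReal.coe_le_coe_iff,
      ← div_eq_mul_inv, le_div_iff₀ ht]
    constructor <;> intro h <;> linarith

end EReal

section Subdifferential

variable {E : Type*} [NormedAddCommGroup E] [InnerProductSpace ℝ E] {g : E → EReal} {z : E} {r : ℝ}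

lemma subdiff_eq_iInter (hr : g z = r) :
    subdiff g z = ⋂ x, innerSL ℝ (x - z) ⁻¹' {t : ℝ | ((r + t : ℝ) : EReal) ≤ g x} := by
  ext v
  simp only [subdiff, mem_ofPred_eq, mem_iInter, mem_preimage, innerSL_apply_apply, hr,
    EReal.coe_add, real_inner_comm]

lemma convex_subdiff (hr : g z = r) : Convex ℝ (subdiff g z) := by
  rw [subdiff_eq_iInter hr]
  refine convex_iInter fun x => Convex.linear_preimage ?_ (innerSL ℝ (x - z)).toLinearMap
  refine IsLowerSet.ordConnected (fun t s hst hs => ?_) |>.convex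
  exact le_trans (EReal.coe_le_coe_iff.2 (by linarith)) hs

lemma isClosed_subdiff (hr : g z = r) : IsClosed (subdiff g z) := by
  rw [subdiff_eq_iInter hr]
  have hcont : Continuous fun t : ℝ => ((r + t : ℝ) : EReal) :=
    continuous_coe_real_ereal.comp (continuous_const.add continuous_id)
  exact isClosed_iInter fun x =>
    (isClosed_le hcont continuous_const).preimage (innerSL ℝ (x - z)).continuous

lemma inner_le_subderiv_of_mem_subdiff (hr : g z = r) {v : E} (hv : v ∈ subdiff g z)
    (w : E) : ((⟪v, w⟫ : ℝ) : EReal) ≤ subderiv g z w := by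
  have hlim : Tendsto (fun p : ℝ × E => ((⟪v, p.2⟫ : ℝ) : EReal)) (𝓝[>] 0 ×ˢ 𝓝 w)
      (𝓝 ((⟪v, w⟫ : ℝ) : EReal)) :=
    (continuous_coe_real_ereal.comp (continuous_const.inner continuous_snd)).tendsto (0, w)
      |>.mono_left (Filter.prod_mono nhdsWithin_le_nhds le_rfl |>.trans_eq nhds_prod_eq.symm)
  rw [← hlim.liminf_eq]
  refine liminf_le_liminf ?_
  filter_upwards [prod_mem_prod self_mem_nhdsWithin univ_mem] with ⟨t, w'⟩ hp
  rw [hr, EReal.le_sub_coe_mul_inv_iff hp.1]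
  simpa [hr, inner_smul_right] using hv (z + t • w')

lemma subderiv_le_of_eventually_le (hr : g z = r) {w : E} {s : ℝ}
    (h : ∀ᶠ t in 𝓝[>] (0 : ℝ), g (z + t • w) ≤ ((r + t * s : ℝ) : EReal)) :
    subderiv g z w ≤ s := by
  refine liminf_le_of_frequently_le' <|
    (tendsto_id.prodMk tendsto_const_nhds : Tendsto (fun t : ℝ => (t, w)) _ _).frequently ?_
  refine ((h.and self_mem_nhdsWithin).mono fun t ⟨hts, ht⟩ => ?_).frequently
  rw [hr]
  exact (EReal.sub_coe_mul_inv_le_iff ht).2 hts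

end Subdifferential

section Polyhedral

variable {E : Type*} [NormedAddCommGroup E] [InnerProductSpace ℝ E] {n : ℕ}

structure PolyhedralEpigraphAt (g : E → EReal) (z : E) (r : ℝ) (a : Fin n → E)
    (c γ : Fin n → ℝ) : Prop where
  apply_eq : g z = r
  le_iff (u : E) (s : ℝ) : g (z + u) ≤ ((r + s : ℝ) : EReal) ↔ ∀ i, ⟪a i, u⟫ + c i * s ≤ γ i

lemma IsPolyhedralSet.exists_polyhedralEpigraphAt [FiniteDimensional ℝ E] {g : E → EReal}
    (hg : IsPolyhedralSet {p : E × ℝ | g p.1 ≤ (p.2 : EReal)}) {z : E} {r : ℝ}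
    (hr : g z = r) :
    ∃ (n : ℕ) (a : Fin n → E) (c γ : Fin n → ℝ), PolyhedralEpigraphAt g z r a c γ := by
  obtain ⟨n, b, β, hepi⟩ := hg
  set a : Fin n → E := fun i =>
    (InnerProductSpace.toDual ℝ E).symm
      ((b i).comp (LinearMap.inl ℝ E ℝ)).toContinuousLinearMap
  have hb : ∀ i (u : E) (s : ℝ), b i (u, s) = ⟪a i, u⟫ + b i (0, 1) * s := by
    intro i u s
    rw [show ((u, s) : E × ℝ) = (u, 0) + s • (0, 1) by simp, map_add, map_smul, smul_eq_mul,
      mul_comm s]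
    simp [a, InnerProductSpace.toDual_symm_apply]
  refine ⟨n, a, fun i => b i (0, 1), fun i => β i - b i (z, r), hr, fun u s => ?_⟩
  rw [show g (z + u) ≤ ((r + s : ℝ) : EReal) ↔ (z + u, r + s) ∈ {p : E × ℝ | g p.1 ≤ p.2}
    from Iff.rfl, hepi]
  refine forall_congr' fun i => ?_
  rw [show ((z + u, r + s) : E × ℝ) = (z, r) + (u, s) from rfl, map_add, hb i u s]
  constructor <;> intro <;> linarith

namespace PolyhedralEpigraphAt

variable {g : E → EReal} {z : E} {r : ℝ} {a : Fin n → E} {c γ : Fin n → ℝ}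

lemma rhs_nonneg (h : PolyhedralEpigraphAt g z r a c γ) (i : Fin n) : 0 ≤ γ i := by
  simpa using (h.le_iff 0 0).1 (by simp [h.apply_eq]) i

lemma coeff_nonpos (h : PolyhedralEpigraphAt g z r a c γ) (i : Fin n) : c i ≤ 0 := by
  by_contra! hc
  have hs : 0 < (γ i + 1) / c i := div_pos (by linarith [h.rhs_nonneg i]) hc
  have := (h.le_iff 0 ((γ i + 1) / c i)).1
    (by rw [add_zero, h.apply_eq, EReal.coe_le_coe_iff]; linarith) i
  rw [inner_zero_right, zero_add, mul_div_cancel₀ _ hc.ne'] at this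
  linarith

lemma mem_subdiff_iff (h : PolyhedralEpigraphAt g z r a c γ) {v : E} :
    v ∈ subdiff g z ↔
      ∀ (u : E) (s : ℝ), (∀ i, ⟪a i, u⟫ + c i * s ≤ γ i) → ⟪v, u⟫ ≤ s := by
  refine ⟨fun hv u s hus => ?_, fun hv x => ?_⟩
  · have := (hv (z + u)).trans ((h.le_iff u s).2 hus)
    rwa [h.apply_eq, add_sub_cancel_left, ← EReal.coe_add, EReal.coe_le_coe_iff,
      add_le_add_iff_left] at this
  · rw [h.apply_eq]
    refine EReal.le_of_forall_lt_iff_le.1 fun ξ hξ => ?_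
    have hx : g (z + (x - z)) ≤ ((r + (ξ - r) : ℝ) : EReal) := by
      rw [add_sub_cancel, add_sub_cancel]
      exact hξ.le
    rw [← EReal.coe_add, EReal.coe_le_coe_iff]
    linarith [hv _ _ ((h.le_iff _ _).1 hx)]

lemma subderiv_le (h : PolyhedralEpigraphAt g z r a c γ) {w : E} {s : ℝ}
    (hw : ∀ i, γ i = 0 → ⟪a i, w⟫ + c i * s ≤ 0) : subderiv g z w ≤ s := by
  -- inactive constraints (`γ i > 0`) stay satisfied along `z + t • w` for small `t`
  have hev : ∀ᶠ t in 𝓝[>] (0 : ℝ), ∀ i, t * (⟪a i, w⟫ + c i * s) ≤ γ i := by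
    refine eventually_all.2 fun i => ?_
    rcases (h.rhs_nonneg i).eq_or_lt with hγ | hγ
    · filter_upwards [self_mem_nhdsWithin] with t ht
      exact hγ ▸ mul_nonpos_of_nonneg_of_nonpos (le_of_lt ht) (hw i hγ.symm)
    · exact (((continuous_mul_const _).tendsto' 0 0 (zero_mul _)).eventually
        (gt_mem_nhds hγ)).filter_mono nhdsWithin_le_nhds |>.mono fun _ => le_of_lt
  refine subderiv_le_of_eventually_le h.apply_eq (hev.mono fun t ht => ?_)
  refine (h.le_iff (t • w) (t * s)).2 fun i => ?_
  rw [inner_smul_right]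
  linarith [ht i]

lemma inv_neg_smul_mem_subdiff (h : PolyhedralEpigraphAt g z r a c γ) {i : Fin n}
    (hγ : γ i = 0) (hc : c i < 0) : (-c i)⁻¹ • a i ∈ subdiff g z := by
  refine h.mem_subdiff_iff.2 fun u s hus => ?_
  rw [real_inner_smul_left, inv_mul_le_iff₀ (neg_pos.2 hc)]
  linarith [hγ ▸ hus i]

lemma add_mem_subdiff (h : PolyhedralEpigraphAt g z r a c γ) {v : E} (hv : v ∈ subdiff g z)
    {i : Fin n} (hγ : γ i = 0) (hc : c i = 0) : v + a i ∈ subdiff g z := by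
  refine h.mem_subdiff_iff.2 fun u s hus => ?_
  have hi := hus i
  rw [hγ, hc, zero_mul, add_zero] at hi
  rw [inner_add_left]
  linarith [h.mem_subdiff_iff.1 hv u s hus]

theorem kcone_eq_ncone_subdiff (h : PolyhedralEpigraphAt g z r a c γ) {v : E}
    (hv : v ∈ subdiff g z) : Kcone g z v = ncone (subdiff g z) v := by
  ext w
  refine ⟨fun hw v' hv' => ?_, fun hw => ?_⟩
  · have := inner_le_subderiv_of_mem_subdiff h.apply_eq hv' w
    rw [hw, EReal.coe_le_coe_iff] at this
    rw [inner_sub_right, real_inner_comm v' w, real_inner_comm v w]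
    linarith
  · refine le_antisymm (h.subderiv_le fun i hγ => ?_)
      (inner_le_subderiv_of_mem_subdiff h.apply_eq hv w)
    rcases (h.coeff_nonpos i).lt_or_eq with hc | hc
    · have hi := hw _ (h.inv_neg_smul_mem_subdiff hγ hc)
      rw [inner_sub_right, inner_smul_right, real_inner_comm (a i), real_inner_comm v, sub_nonpos,
        inv_mul_le_iff₀ (neg_pos.2 hc)] at hi
      linarith
    · have hi := hw _ (h.add_mem_subdiff hv hγ hc)
      rw [add_sub_cancel_left, real_inner_comm] at hi
      rwa [hc, zero_mul, add_zero]

end PolyhedralEpigraphAt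

end Polyhedral

/-- relative interior subgradients of a polyhedral function correspond
to the critical cone being a linear subspace. -/
theorem stmt1 {m : ℕ} (g : EuclideanSpace ℝ (Fin m) → EReal) (hg : IsPolyhedralFn g)
    (zb lb : EuclideanSpace ℝ (Fin m)) (hz : g zb ≠ ⊤) (hl : lb ∈ subdiff g zb) :
    lb ∈ intrinsicInterior ℝ (subdiff g zb) ↔ IsLinSubspace (Kcone g zb lb) := by
  obtain ⟨-, hbot, hepi⟩ := hg
  have hr : g zb = (g zb).toReal := (EReal.coe_toReal hz (hbot zb)).symm
  obtain ⟨n, a, c, γ, h⟩ := hepi.exists_polyhedralEpigraphAt hr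
  rw [h.kcone_eq_ncone_subdiff hl]
  exact mem_intrinsicInterior_iff_isLinSubspace_ncone (convex_subdiff hr) (isClosed_subdiff hr) hl
end
end

section
/- Let g : ℝᵐ → ℝ ∪ {∞} be a polyhedral function and z̄ ∈ dom g. Then there exists r > 0 such that for every w ∈ T_{dom g}(z̄) with ‖w‖ ≤ r one has g(z̄ + w) = g(z̄) + dg(z̄)(w). In other words, near z̄ the polyhedral function agrees exactly with its first-order (subderivative) expansion along tangent directions. -/
open Filter Topology Set Metric

noncomputable section

/-!
The epigraph of `g` is cut out by finitely many half-spaces `⟨a, z⟩ + α c ≤ β`. Properness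
forces `c ≤ 0`, with `c < 0` for at least one of them: the constraints with `c = 0` describe
`dom g`, and those with `c < 0` make `g` the maximum of finitely many affine functions on it.
Near `z̄` only the constraints and the affine pieces that are active at `z̄` matter, so for small
`w` in the linearized cone of `dom g` at `z̄` (which contains the tangent cone) we get
`g (z̄ + w) = g z̄ + S w`, where `S` is the maximum of the linear parts of the active pieces.
Since `S` is continuous, positively homogeneous and `g (z̄ + w) ≥ g z̄ + S w` holds globally,
`S` is also the subderivative of `g` at `z̄` along such `w`.
-/

theorem EReal.eq_of_forall_le_coe_iff {x y : EReal} (h : ∀ α : ℝ, x ≤ α ↔ y ≤ α) : x = y :=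
  le_antisymm (EReal.le_of_forall_lt_iff_le.1 fun α hα => (h α).2 hα.le)
    (EReal.le_of_forall_lt_iff_le.1 fun α hα => (h α).1 hα.le)

theorem EReal.coe_le_sub_coe_mul_inv {x : EReal} {M s t : ℝ} (ht : 0 < t)
    (h : ((M + t * s : ℝ) : EReal) ≤ x) : (s : EReal) ≤ (x - M) * ((t⁻¹ : ℝ) : EReal) := by
  induction x using EReal.rec with
  | bot => exact absurd h (not_le.2 (EReal.bot_lt_coe _))
  | top =>
    rw [EReal.top_sub_coe, EReal.top_mul_of_pos (EReal.coe_pos.2 (inv_pos.2 ht))]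
    exact le_top
  | coe x =>
    rw [← EReal.coe_sub, ← EReal.coe_mul, EReal.coe_le_coe_iff, ← div_eq_mul_inv, le_div_iff₀ ht]
    have := EReal.coe_le_coe_iff.1 h
    linarith

theorem subderiv_eq_of_ray {E : Type*} [NormedAddCommGroup E] [NormedSpace ℝ E]
    {g : E → EReal} {z w : E} {M : ℝ} {S : E → ℝ} (hz : g z = M) (hS : ContinuousAt S w)
    (hle : ∀ t > 0, ∀ v, ((M + t * S v : ℝ) : EReal) ≤ g (z + t • v))
    (hray : ∀ᶠ t in 𝓝[>] 0, g (z + t • w) = ((M + t * S w : ℝ) : EReal)) :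
    subderiv g z w = S w := by
  apply le_antisymm
  · apply liminf_le_of_frequently_le'
    refine (tendsto_id.prodMk tendsto_const_nhds).frequently (Eventually.frequently ?_)
    filter_upwards [hray, self_mem_nhdsWithin] with t hgt (ht : 0 < t)
    rw [id, hgt, hz, ← EReal.coe_sub, ← EReal.coe_mul, EReal.coe_le_coe_iff]
    field_simp
    linarith
  · have hSw : Tendsto (fun p : ℝ × E => (S p.2 : EReal)) (𝓝[>] 0 ×ˢ 𝓝 w) (𝓝 (S w)) :=
      (continuous_coe_real_ereal.continuousAt.comp hS).tendsto.comp tendsto_snd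
    rw [← hSw.liminf_eq]
    refine liminf_le_liminf ?_
    filter_upwards [prod_mem_prod self_mem_nhdsWithin univ_mem] with p hp
    rw [hz]
    exact EReal.coe_le_sub_coe_mul_inv hp.1 (hle p.1 hp.1 p.2)

section MaxAffine

variable {E : Type*} [NormedAddCommGroup E] [NormedSpace ℝ E] {κ : Type*} [Fintype κ]
  [Nonempty κ] (ℓ : κ → E →L[ℝ] ℝ) (γ : κ → ℝ)

def maxAffine (z : E) : ℝ :=
  Finset.univ.sup' Finset.univ_nonempty fun j => ℓ j z + γ j

def activePieces (z : E) : Finset κ :=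
  Finset.univ.filter fun j => ℓ j z + γ j = maxAffine ℓ γ z

theorem activePieces_nonempty (z : E) : (activePieces ℓ γ z).Nonempty := by
  obtain ⟨j, -, hj⟩ := Finset.exists_mem_eq_sup' Finset.univ_nonempty fun j => ℓ j z + γ j
  exact ⟨j, Finset.mem_filter.2 ⟨Finset.mem_univ j, hj.symm⟩⟩

def activeSup (z w : E) : ℝ :=
  (activePieces ℓ γ z).sup' (activePieces_nonempty ℓ γ z) fun j => ℓ j w

theorem continuous_activeSup (z : E) : Continuous (activeSup ℓ γ z) :=
  Continuous.finset_sup'_apply _ fun j _ => (ℓ j).continuous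

theorem activeSup_smul (z w : E) {t : ℝ} (ht : 0 ≤ t) :
    activeSup ℓ γ z (t • w) = t * activeSup ℓ γ z w := by
  rw [activeSup, activeSup, Finset.apply_sup'_eq_sup'_comp _ (t * ·)
    fun x y => mul_max_of_nonneg x y ht]
  simp only [map_smul, smul_eq_mul, Function.comp_def]

theorem activeSup_zero (z : E) : activeSup ℓ γ z 0 = 0 := by
  simpa using activeSup_smul ℓ γ z 0 le_rfl

theorem maxAffine_add_activeSup_le (z u : E) :
    maxAffine ℓ γ z + activeSup ℓ γ z u ≤ maxAffine ℓ γ (z + u) := by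
  obtain ⟨j, hj, hju⟩ := Finset.exists_mem_eq_sup' (activePieces_nonempty ℓ γ z) fun j => ℓ j u
  calc maxAffine ℓ γ z + activeSup ℓ γ z u = ℓ j (z + u) + γ j := by
        rw [activeSup, hju, map_add, ← (Finset.mem_filter.1 hj).2]; ring
    _ ≤ maxAffine ℓ γ (z + u) :=
        Finset.le_sup' (fun j => ℓ j (z + u) + γ j) (Finset.mem_univ j)

theorem eventually_maxAffine_add_eq (z : E) :
    ∀ᶠ u in 𝓝 0, maxAffine ℓ γ (z + u) = maxAffine ℓ γ z + activeSup ℓ γ z u := by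
  have hpiece : ∀ j, ∀ᶠ u in 𝓝 (0 : E),
      ℓ j (z + u) + γ j ≤ maxAffine ℓ γ z + activeSup ℓ γ z u := by
    intro j
    by_cases hj : j ∈ activePieces ℓ γ z
    · refine Eventually.of_forall fun u => ?_
      have hju : ℓ j u ≤ activeSup ℓ γ z u := Finset.le_sup' (fun j => ℓ j u) hj
      rw [map_add, ← (Finset.mem_filter.1 hj).2]
      linarith
    · have hlt : ℓ j z + γ j < maxAffine ℓ γ z :=
        (Finset.le_sup' (fun j => ℓ j z + γ j) (Finset.mem_univ j)).lt_of_ne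
          fun h => hj (Finset.mem_filter.2 ⟨Finset.mem_univ j, h⟩)
      have hcont : Tendsto (fun u => ℓ j (z + u) + γ j - activeSup ℓ γ z u) (𝓝 0)
          (𝓝 (ℓ j z + γ j)) := by
        have hc : Continuous fun u => ℓ j (z + u) + γ j - activeSup ℓ γ z u :=
          (((ℓ j).continuous.comp (continuous_const_add z)).add continuous_const).sub
            (continuous_activeSup ℓ γ z)
        simpa [activeSup_zero] using hc.tendsto 0
      filter_upwards [hcont.eventually_lt_const hlt] with u hu
      linarith
  filter_upwards [eventually_all.2 hpiece] with u hu
  exact le_antisymm (Finset.sup'_le _ _ fun j _ => hu j) (maxAffine_add_activeSup_le ℓ γ z u)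

end MaxAffine

section LinearConstraints

variable {E : Type*} [NormedAddCommGroup E] [NormedSpace ℝ E] {ι : Type*}
  (a : ι → E →L[ℝ] ℝ) (β : ι → ℝ)

def linearizedCone (z : E) : Set E :=
  {u | ∀ i, a i z = β i → a i u ≤ 0}

theorem isClosed_linearizedCone (z : E) : IsClosed (linearizedCone a β z) := by
  simp only [linearizedCone, ofPred_forall]
  exact isClosed_iInter fun i => isClosed_iInter fun _ =>
    isClosed_le (a i).continuous continuous_const

theorem smul_mem_linearizedCone {z u : E} (hu : u ∈ linearizedCone a β z) {t : ℝ} (ht : 0 ≤ t) :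
    t • u ∈ linearizedCone a β z := fun i hi => by
  rw [map_smul, smul_eq_mul]
  exact mul_nonpos_of_nonneg_of_nonpos ht (hu i hi)

theorem tcone_subset_linearizedCone (z : E) :
    tcone {x | ∀ i, a i x ≤ β i} z ⊆ linearizedCone a β z := by
  refine closure_minimal ?_ (isClosed_linearizedCone a β z)
  rintro u ⟨t, ht, hmem⟩ i hi
  have := hmem i
  rw [map_add, map_smul, smul_eq_mul, hi] at this
  exact nonpos_of_mul_nonpos_right (by linarith) ht

theorem eventually_mem_of_mem_linearizedCone [Finite ι] {z : E} (hz : ∀ i, a i z ≤ β i) :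
    ∀ᶠ u in 𝓝 0, u ∈ linearizedCone a β z → ∀ i, a i (z + u) ≤ β i := by
  have hslack : ∀ i, ∀ᶠ u in 𝓝 (0 : E), a i z < β i → a i (z + u) ≤ β i := by
    intro i
    by_cases hi : a i z < β i
    · have hcont : Tendsto (fun u => a i (z + u)) (𝓝 0) (𝓝 (a i z)) := by
        have hc : Continuous fun u => a i (z + u) := (a i).continuous.comp (continuous_const_add z)
        simpa using hc.tendsto 0
      filter_upwards [hcont.eventually_lt_const hi] with u hu _ using hu.le
    · exact Eventually.of_forall fun u h => absurd h hi
  filter_upwards [eventually_all.2 hslack] with u hu hcone i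
  rcases (hz i).lt_or_eq with hi | hi
  · exact hu i hi
  · rw [map_add, hi]
    linarith [hcone i hi]

end LinearConstraints

section MaxAffineOn

variable {E : Type*} [NormedAddCommGroup E] [NormedSpace ℝ E] {ι κ : Type*} [Fintype κ]
  [Nonempty κ] (a : ι → E →L[ℝ] ℝ) (β : ι → ℝ) (ℓ : κ → E →L[ℝ] ℝ) (γ : κ → ℝ)

open Classical in
def maxAffineOn (z : E) : EReal :=
  if ∀ i, a i z ≤ β i then (maxAffine ℓ γ z : EReal) else ⊤

variable {a β}

theorem maxAffineOn_of_mem {z : E} (hz : ∀ i, a i z ≤ β i) :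
    maxAffineOn a β ℓ γ z = maxAffine ℓ γ z :=
  if_pos hz

variable (a β)

theorem maxAffineOn_ne_top_iff (z : E) : maxAffineOn a β ℓ γ z ≠ ⊤ ↔ ∀ i, a i z ≤ β i := by
  unfold maxAffineOn
  split_ifs with h <;> simp [h]

theorem maxAffine_add_activeSup_le_maxAffineOn (z u : E) :
    ((maxAffine ℓ γ z + activeSup ℓ γ z u : ℝ) : EReal) ≤ maxAffineOn a β ℓ γ (z + u) := by
  unfold maxAffineOn
  split_ifs
  · exact EReal.coe_le_coe_iff.2 (maxAffine_add_activeSup_le ℓ γ z u)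
  · exact le_top

theorem eventually_maxAffineOn_add_eq [Finite ι] {z : E} (hz : ∀ i, a i z ≤ β i) :
    ∀ᶠ u in 𝓝 0, u ∈ linearizedCone a β z →
      maxAffineOn a β ℓ γ (z + u) = ((maxAffine ℓ γ z + activeSup ℓ γ z u : ℝ) : EReal) := by
  filter_upwards [eventually_mem_of_mem_linearizedCone a β hz,
    eventually_maxAffine_add_eq ℓ γ z] with u hmem heq hu
  rw [maxAffineOn_of_mem ℓ γ (hmem hu), heq]

theorem subderiv_maxAffineOn [Finite ι] {z w : E} (hz : ∀ i, a i z ≤ β i)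
    (hw : w ∈ linearizedCone a β z) :
    subderiv (maxAffineOn a β ℓ γ) z w = activeSup ℓ γ z w := by
  refine subderiv_eq_of_ray (maxAffineOn_of_mem ℓ γ hz) (continuous_activeSup ℓ γ z).continuousAt
    (fun t ht v => ?_) ?_
  · rw [← activeSup_smul ℓ γ z v ht.le]
    exact maxAffine_add_activeSup_le_maxAffineOn a β ℓ γ z (t • v)
  · have hsmul : Tendsto (fun t : ℝ => t • w) (𝓝[>] 0) (𝓝 0) := by
      have hc : Continuous fun t : ℝ => t • w := continuous_id.smul continuous_const
      simpa using (hc.tendsto 0).mono_left nhdsWithin_le_nhds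
    filter_upwards [hsmul.eventually (eventually_maxAffineOn_add_eq a β ℓ γ hz),
      self_mem_nhdsWithin] with t ht (ht₀ : 0 < t)
    rw [ht (smul_mem_linearizedCone a β hw ht₀.le), activeSup_smul ℓ γ z w ht₀.le]

end MaxAffineOn

theorem IsPolyhedralFn.exists_le_iff {E : Type*} [NormedAddCommGroup E] [NormedSpace ℝ E]
    [FiniteDimensional ℝ E] {g : E → EReal} (hg : IsPolyhedralFn g) :
    ∃ (s : ℕ) (a : Fin s → E →L[ℝ] ℝ) (c β : Fin s → ℝ), (∀ i, c i ≤ 0) ∧ (∃ i, c i < 0) ∧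
      ∀ z (α : ℝ), g z ≤ α ↔ ∀ i, a i z + α * c i ≤ β i := by
  obtain ⟨⟨z₀, hz₀⟩, hbot, s, b, β, hepi⟩ := hg
  let a : Fin s → E →L[ℝ] ℝ := fun i => LinearMap.toContinuousLinearMap (b i ∘ₗ LinearMap.inl ℝ E ℝ)
  let c : Fin s → ℝ := fun i => b i (0, 1)
  have hle : ∀ z (α : ℝ), g z ≤ α ↔ ∀ i, a i z + α * c i ≤ β i := by
    intro z α
    have hb : ∀ i, b i (z, α) = a i z + α * c i := fun i => by
      rw [show ((z, α) : E × ℝ) = (z, 0) + α • (0, 1) by simp, map_add, map_smul, smul_eq_mul]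
      rfl
    exact (Set.ext_iff.1 hepi (z, α)).trans (forall_congr' fun i => by rw [hb])
  obtain ⟨x₀, hx₀⟩ : ∃ x : ℝ, g z₀ = x := ⟨_, (EReal.coe_toReal hz₀ (hbot z₀)).symm⟩
  -- the epigraph contains the vertical ray above `(z₀, x₀)`
  have hc : ∀ i, c i ≤ 0 := by
    intro i
    by_contra! hci
    obtain ⟨α, hx₀α, hαc⟩ : ∃ α, x₀ ≤ α ∧ β i - a i z₀ < α * c i := by
      refine ⟨x₀ + (|β i - a i z₀ - x₀ * c i| + 1) / c i, le_add_of_nonneg_right (by positivity),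
        ?_⟩
      rw [add_mul, div_mul_cancel₀ _ hci.ne']
      linarith [le_abs_self (β i - a i z₀ - x₀ * c i)]
    have := (hle z₀ α).1 (hx₀ ▸ EReal.coe_le_coe_iff.2 hx₀α) i
    linarith
  -- otherwise the whole vertical line through `(z₀, x₀)` lies in the epigraph
  have hneg : ∃ i, c i < 0 := by
    by_contra! h
    have hc0 : ∀ i, c i = 0 := fun i => le_antisymm (hc i) (h i)
    have := (hle z₀ (x₀ - 1)).2 fun i => by simpa [hc0 i] using (hle z₀ x₀).1 hx₀.le i
    rw [hx₀, EReal.coe_le_coe_iff] at this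
    linarith
  exact ⟨s, a, c, β, hc, hneg, hle⟩

theorem IsPolyhedralFn.exists_eq_maxAffineOn {E : Type*} [NormedAddCommGroup E]
    [NormedSpace ℝ E] [FiniteDimensional ℝ E] {g : E → EReal} (hg : IsPolyhedralFn g) :
    ∃ (ι κ : Type) (_ : Fintype ι) (_ : Fintype κ) (_ : Nonempty κ) (a : ι → E →L[ℝ] ℝ)
      (β : ι → ℝ) (ℓ : κ → E →L[ℝ] ℝ) (γ : κ → ℝ), g = maxAffineOn a β ℓ γ := by
  obtain ⟨s, a, c, β, hc, hneg, hle⟩ := hg.exists_le_iff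
  have hpiece : ∀ z (α : ℝ) i, c i < 0 →
      (a i z + α * c i ≤ β i ↔ -(c i)⁻¹ * a i z + β i / c i ≤ α) := by
    intro z α i hi
    rw [show -(c i)⁻¹ * a i z + β i / c i = (β i - a i z) / c i by field_simp; ring,
      div_le_iff_of_neg hi]
    constructor <;> intro <;> linarith
  have : Nonempty {i // c i < 0} := nonempty_subtype.2 hneg
  refine ⟨{i // c i = 0}, {i // c i < 0}, inferInstance, inferInstance, inferInstance,
    fun i => a i, fun i => β i, fun j => -(c j)⁻¹ • a j, fun j => β j / c j,
    funext fun z => EReal.eq_of_forall_le_coe_iff fun α => ?_⟩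
  have hsplit : (∀ i, a i z + α * c i ≤ β i) ↔ (∀ i : {i // c i = 0}, a i z ≤ β i) ∧
      ∀ j : {i // c i < 0}, -(c j)⁻¹ * a j z + β j / c j ≤ α := by
    refine ⟨fun h => ⟨fun i => by simpa [i.2] using h i, fun j => (hpiece z α j j.2).1 (h j)⟩,
      fun ⟨h₀, h₁⟩ i => ?_⟩
    rcases (hc i).lt_or_eq with hi | hi
    · exact (hpiece z α i hi).2 (h₁ ⟨i, hi⟩)
    · simpa [hi] using h₀ ⟨i, hi⟩
  rw [hle, hsplit, maxAffineOn]
  split_ifs with hD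
  · simp [maxAffine, hD]
  · exact iff_of_false (fun h => hD h.1) (by simp)

/-- a polyhedral function agrees with its first-order expansion along
tangent directions near the base point. -/
theorem stmt4 {m : ℕ} (g : EuclideanSpace ℝ (Fin m) → EReal) (hg : IsPolyhedralFn g)
    (zb : EuclideanSpace ℝ (Fin m)) (hz : g zb ≠ ⊤) :
    ∃ r > (0 : ℝ), ∀ w ∈ tcone {z | g z ≠ ⊤} zb, ‖w‖ ≤ r →
      g (zb + w) = g zb + subderiv g zb w := by
  obtain ⟨ι, κ, _, _, _, a, β, ℓ, γ, rfl⟩ := hg.exists_eq_maxAffineOn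
  have hdom : {z | maxAffineOn a β ℓ γ z ≠ ⊤} = {z | ∀ i, a i z ≤ β i} :=
    Set.ext (maxAffineOn_ne_top_iff a β ℓ γ)
  have hzb := (maxAffineOn_ne_top_iff a β ℓ γ zb).1 hz
  obtain ⟨ε, hε, hball⟩ :=
    Metric.eventually_nhds_iff.1 (eventually_maxAffineOn_add_eq a β ℓ γ hzb)
  refine ⟨ε / 2, half_pos hε, fun w hw hwr => ?_⟩
  rw [hdom] at hw
  have hwK := tcone_subset_linearizedCone a β zb hw
  rw [subderiv_maxAffineOn a β ℓ γ hzb hwK, maxAffineOn_of_mem ℓ γ hzb,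
    hball (by rw [dist_zero_right]; linarith) hwK, EReal.coe_add]
end
end

section
/- (Polar relation of critical cones.) Let g : ℝᵐ → ℝ ∪ {∞} be a polyhedral function and (z̄, λ̄) ∈ gph ∂g. Then K_g(z̄, λ̄) = (K_{g*}(λ̄, z̄))*, i.e., the critical cone of g at z̄ for λ̄ is the polar of the critical cone of the Fenchel conjugate g* at λ̄ for z̄. -/
open Filter Topology Set Metric

noncomputable section

/-!
Write the epigraph of `g` as `{(z, α) | ⟪aᵢ, z⟫ + α cᵢ ≤ βᵢ}` and let `r = g z̄`. Since `λ̄ ∈ ∂g z`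
iff `g z ≤ r + ⟪λ̄, z - z̄⟫`, the points `z` with `λ̄ ∈ ∂g z` form a polyhedron, and `z̄ + t w` lies
in it for small `t > 0` as soon as `⟪aᵢ + cᵢ λ̄, w⟫ ≤ 0` for every constraint active at `(z̄, r)`.

* A critical direction `w` of `g` satisfies these inequalities, because near `(z̄, r)` the
  epigraph lies in the cone cut out by the active constraints. Then `z̄ + t w ∈ ∂g*(λ̄)` gives
  `⟪z̄ + t w, u⟫ ≤ dg*(λ̄)(u) = ⟪z̄, u⟫` for every critical direction `u` of `g*`, so
  `⟪w, u⟫ ≤ 0`.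
* Conversely, for active `i` and small `t > 0`, `λ̄ + t (aᵢ + cᵢ λ̄) ∈ ∂g z̄`, which makes
  `aᵢ + cᵢ λ̄` a critical direction of `g*`. So every `w` in the polar satisfies the active
  inequalities, and `λ̄ ∈ ∂g (z̄ + t w)` makes `w` critical for `g`.

Both critical-cone memberships come from one fact: a subgradient shared by the two ends of a
segment makes a convex function affine on it.
-/

open scoped RealInnerProductSpace

namespace EReal

lemma coe_le_sub_coe_mul_inv_iff {G : EReal} {ρ t γ : ℝ} (ht : 0 < t) :
    (γ : EReal) ≤ (G - ρ) * ((t⁻¹ : ℝ) : EReal) ↔ ((ρ + t * γ : ℝ) : EReal) ≤ G := by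
  have ht' : (0 : EReal) < ((t⁻¹ : ℝ) : EReal) := by exact_mod_cast inv_pos.mpr ht
  induction G using EReal.rec with
  | bot => simp only [EReal.bot_sub, EReal.bot_mul_of_pos ht', le_bot_iff, EReal.coe_ne_bot]
  | top => simp only [EReal.top_sub_coe, EReal.top_mul_of_pos ht', le_top]
  | coe σ =>
    rw [← EReal.coe_sub, ← EReal.coe_mul, EReal.coe_le_coe_iff, EReal.coe_le_coe_iff,
      ← div_eq_mul_inv, le_div_iff₀ ht]
    constructor <;> intro h <;> linarith

lemma sub_coe_mul_inv_le_coe_iff {G : EReal} {ρ t γ : ℝ} (ht : 0 < t) :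
    (G - ρ) * ((t⁻¹ : ℝ) : EReal) ≤ γ ↔ G ≤ ((ρ + t * γ : ℝ) : EReal) := by
  have ht' : (0 : EReal) < ((t⁻¹ : ℝ) : EReal) := by exact_mod_cast inv_pos.mpr ht
  induction G using EReal.rec with
  | bot => simp only [EReal.bot_sub, EReal.bot_mul_of_pos ht', bot_le]
  | top => simp only [EReal.top_sub_coe, EReal.top_mul_of_pos ht', top_le_iff, EReal.coe_ne_top]
  | coe σ =>
    rw [← EReal.coe_sub, ← EReal.coe_mul, EReal.coe_le_coe_iff, EReal.coe_le_coe_iff,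
      ← div_eq_mul_inv, div_le_iff₀ ht]
    constructor <;> intro h <;> linarith

end EReal

lemma eventually_forall_add_mul_le {ι : Type*} [Finite ι] {p q β : ι → ℝ}
    (hp : ∀ i, p i ≤ β i) (hq : ∀ i, p i = β i → q i ≤ 0) :
    ∀ᶠ t in 𝓝[>] (0 : ℝ), ∀ i, p i + t * q i ≤ β i := by
  refine eventually_all.2 fun i => ?_
  rcases (hp i).eq_or_lt with hact | hslack
  · filter_upwards [self_mem_nhdsWithin] with t ht
    nlinarith [hq i hact, mem_Ioi.1 ht]
  · have hlim : Tendsto (fun t : ℝ => p i + t * q i) (𝓝[>] 0) (𝓝 (p i)) :=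
      (Continuous.tendsto' (by fun_prop) 0 _ (by simp)).mono_left nhdsWithin_le_nhds
    exact (hlim.eventually (gt_mem_nhds hslack)).mono fun _ => le_of_lt

section

variable {F : Type*} [NormedAddCommGroup F] [InnerProductSpace ℝ F]

lemma convex_inner_add_mul_le (u : F) (k m : ℝ) :
    Convex ℝ {p : F × ℝ | ⟪u, p.1⟫ + p.2 * k ≤ m} := by
  intro p hp q hq a b ha hb hab
  simp only [mem_ofPred_eq, Prod.fst_add, Prod.snd_add, Prod.smul_fst, Prod.smul_snd,
    inner_add_right, real_inner_smul_right, smul_eq_mul] at hp hq ⊢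
  have hm : m = a * m + b * m := by rw [← add_mul, hab, one_mul]
  nlinarith [mul_le_mul_of_nonneg_left hp ha, mul_le_mul_of_nonneg_left hq hb]

lemma exists_eq_coe_of_mem_subdiff {g : F → EReal} (hg : ∃ z, g z ≠ ⊤) {x v : F}
    (hx : g x ≠ ⊥) (hv : v ∈ subdiff g x) : ∃ ρ : ℝ, g x = ρ := by
  obtain ⟨z, hz⟩ := hg
  refine ⟨(g x).toReal, (EReal.coe_toReal (fun htop => hz ?_) hx).symm⟩
  simpa [htop] using hv z

lemma mem_subdiff_iff_le {g : F → EReal} {x v z : F} {ρ : ℝ} (hx : g x = ρ)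
    (hv : v ∈ subdiff g x) : v ∈ subdiff g z ↔ g z ≤ ((ρ + ⟪v, z - x⟫ : ℝ) : EReal) := by
  constructor
  · intro hz
    have h := hz x
    rw [hx] at h
    cases hgz : g z using EReal.rec with
    | bot => exact bot_le
    | top => simp [hgz] at h
    | coe σ =>
      rw [hgz, ← EReal.coe_add, EReal.coe_le_coe_iff] at h
      rw [EReal.coe_le_coe_iff, inner_sub_right]
      rw [inner_sub_right] at h
      linarith
  · intro hz y
    calc g z + (⟪v, y - z⟫ : EReal)
        ≤ ((ρ + ⟪v, z - x⟫ : ℝ) : EReal) + (⟪v, y - z⟫ : EReal) := by gcongr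
      _ = ((ρ + ⟪v, y - x⟫ : ℝ) : EReal) := by
        rw [← EReal.coe_add, inner_sub_right, inner_sub_right, inner_sub_right]
        ring_nf
      _ ≤ g y := by simpa [hx, inner_sub_right] using hv y

lemma inner_le_subderiv {g : F → EReal} {x v : F} {ρ : ℝ} (hx : g x = ρ)
    (hv : v ∈ subdiff g x) (w : F) : (⟪v, w⟫ : EReal) ≤ subderiv g x w := by
  have hlim : Tendsto (fun p : ℝ × F => ((⟪v, p.2⟫ : ℝ) : EReal)) (𝓝[>] 0 ×ˢ 𝓝 w)
      (𝓝 (⟪v, w⟫ : EReal)) :=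
    ((continuous_coe_real_ereal.comp (continuous_const.inner continuous_id)).tendsto w).comp
      tendsto_snd
  rw [← hlim.liminf_eq]
  refine liminf_le_liminf ?_
  filter_upwards [(eventually_mem_nhdsWithin (s := Ioi (0 : ℝ))).prod_inl (𝓝 w)] with p hp
  rw [hx, EReal.coe_le_sub_coe_mul_inv_iff hp]
  simpa [real_inner_smul_right, hx] using hv (x + p.1 • p.2)

lemma subderiv_le_of_eventually_le_s6 {g : F → EReal} {x w : F} {ρ γ : ℝ} (hx : g x = ρ)
    (h : ∀ᶠ s in 𝓝[>] (0 : ℝ), g (x + s • w) ≤ ((ρ + s * γ : ℝ) : EReal)) :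
    subderiv g x w ≤ γ := by
  refine liminf_le_of_frequently_le' ((tendsto_id.prodMk tendsto_const_nhds).frequently
    (f := fun s : ℝ => (s, w)) ?_)
  refine (h.and self_mem_nhdsWithin).frequently.mono fun s ⟨hs, hpos⟩ => ?_
  rwa [hx, EReal.sub_coe_mul_inv_le_coe_iff hpos]

lemma frequently_lt_of_subderiv_lt {g : F → EReal} {x w : F} {ρ γ : ℝ} (hx : g x = ρ)
    (h : subderiv g x w < γ) :
    ∃ᶠ p in 𝓝[>] (0 : ℝ) ×ˢ 𝓝 w, 0 < p.1 ∧ g (x + p.1 • p.2) < ((ρ + p.1 * γ : ℝ) : EReal) := by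
  refine ((frequently_lt_of_liminf_lt (by isBoundedDefault) h).and_eventually
    ((eventually_mem_nhdsWithin (s := Ioi (0 : ℝ))).prod_inl (𝓝 w))).mono
      fun p ⟨hlt, hp⟩ => ⟨hp, ?_⟩
  rw [hx] at hlt
  exact not_le.1 fun hle => hlt.not_ge ((EReal.coe_le_sub_coe_mul_inv_iff hp).2 hle)

lemma mem_polarCone_Kcone_of_add_smul_mem_subdiff {g : F → EReal} {x y w : F} {ρ t : ℝ}
    (hx : g x = ρ) (ht : 0 < t) (hyw : y + t • w ∈ subdiff g x) :
    w ∈ polarCone (Kcone g x y) := by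
  intro u hu
  have h := inner_le_subderiv hx hyw u
  rw [show subderiv g x u = ⟪y, u⟫ from hu, EReal.coe_le_coe_iff, inner_add_left,
    real_inner_smul_left] at h
  exact nonpos_of_mul_nonpos_right (by linarith) ht

lemma mem_Kcone_of_mem_subdiff_add_smul {g : F → EReal}
    (hconv : Convex ℝ {p : F × ℝ | g p.1 ≤ (p.2 : EReal)}) {x v w : F} {ρ t : ℝ}
    (hx : g x = ρ) (hv : v ∈ subdiff g x) (ht : 0 < t) (hvt : v ∈ subdiff g (x + t • w)) :
    w ∈ Kcone g x v := by
  have hend : g (x + t • w) ≤ ((ρ + t * ⟪v, w⟫ : ℝ) : EReal) := by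
    simpa [real_inner_smul_right] using (mem_subdiff_iff_le hx hv).1 hvt
  have hseg : ∀ s ∈ Ioo 0 t, g (x + s • w) ≤ ((ρ + s * ⟪v, w⟫ : ℝ) : EReal) := by
    intro s hs
    have h := hconv.add_smul_mem (x := (x, ρ)) (y := (t • w, t * ⟪v, w⟫)) (by simp [hx])
      (by simpa using hend) ⟨div_nonneg hs.1.le ht.le, (div_le_one ht).2 hs.2.le⟩
    have hst : s / t * t = s := div_mul_cancel₀ s ht.ne'
    simpa [smul_smul, hst, ← mul_assoc] using h
  refine le_antisymm (subderiv_le_of_eventually_le_s6 hx ?_) (inner_le_subderiv hx hv w)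
  filter_upwards [Ioo_mem_nhdsGT ht] using hseg

lemma convex_epigraph_fconj (g : F → EReal) :
    Convex ℝ {p : F × ℝ | fconj g p.1 ≤ (p.2 : EReal)} := by
  have hepi : {p : F × ℝ | fconj g p.1 ≤ (p.2 : EReal)} =
      ⋂ z, {p : F × ℝ | (⟪p.1, z⟫ : EReal) - g z ≤ p.2} := by
    ext p
    simp [fconj]
  rw [hepi]
  refine convex_iInter fun z => ?_
  cases g z using EReal.rec with
  | bot => simp [convex_empty]
  | top => simp [convex_univ]
  | coe σ =>
    have hσ : {p : F × ℝ | (⟪p.1, z⟫ : EReal) - σ ≤ p.2} = {p | ⟪z, p.1⟫ + p.2 * (-1) ≤ σ} := by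
      ext p
      rw [mem_ofPred_eq, mem_ofPred_eq, ← EReal.coe_sub, EReal.coe_le_coe_iff, real_inner_comm]
      constructor <;> intro h <;> linarith
    rw [hσ]
    exact convex_inner_add_mul_le z (-1) σ

lemma fconj_eq_of_mem_subdiff {g : F → EReal} {z v : F} {ρ : ℝ} (hz : g z = ρ)
    (hv : v ∈ subdiff g z) : fconj g v = ((⟪v, z⟫ - ρ : ℝ) : EReal) := by
  refine le_antisymm (iSup_le fun x => ?_) ?_
  · have h := hv x
    rw [hz] at h
    cases hgx : g x using EReal.rec with
    | bot => simp [hgx, ← EReal.coe_add] at h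
    | top => simp
    | coe σ =>
      rw [hgx, ← EReal.coe_add, EReal.coe_le_coe_iff, inner_sub_right] at h
      rw [← EReal.coe_sub, EReal.coe_le_coe_iff]
      linarith
  · rw [EReal.coe_sub, ← hz]
    exact le_iSup (fun x => (⟪v, x⟫ : EReal) - g x) z

lemma mem_subdiff_fconj {g : F → EReal} {z v : F} {ρ : ℝ} (hz : g z = ρ)
    (hv : v ∈ subdiff g z) : z ∈ subdiff (fconj g) v := by
  intro μ
  rw [fconj_eq_of_mem_subdiff hz hv, ← EReal.coe_add]
  have heq : ⟪v, z⟫ - ρ + ⟪z, μ - v⟫ = ⟪μ, z⟫ - ρ := by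
    rw [inner_sub_right, real_inner_comm z μ, real_inner_comm z v]
    ring
  rw [heq, EReal.coe_sub, ← hz]
  exact le_iSup (fun x => (⟪μ, x⟫ : EReal) - g x) z

lemma LinearMap.exists_inner_add_mul_eq [FiniteDimensional ℝ F] (b : F × ℝ →ₗ[ℝ] ℝ) :
    ∃ (a : F) (k : ℝ), ∀ p : F × ℝ, b p = ⟪a, p.1⟫ + p.2 * k := by
  refine ⟨(InnerProductSpace.toDual ℝ F).symm (b ∘ₗ LinearMap.inl ℝ F ℝ).toContinuousLinearMap,
    b (0, 1), fun p => ?_⟩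
  have hp : p = (p.1, 0) + p.2 • ((0 : F), (1 : ℝ)) := by ext <;> simp
  rw [InnerProductSpace.toDual_symm_apply]
  calc b p = b ((p.1, 0) + p.2 • ((0 : F), (1 : ℝ))) := congrArg b hp
    _ = _ := by rw [map_add, map_smul, smul_eq_mul]; rfl

lemma exists_le_iff_of_isPolyhedralSet_epigraph [FiniteDimensional ℝ F] {g : F → EReal}
    (hg : IsPolyhedralSet {p : F × ℝ | g p.1 ≤ (p.2 : EReal)}) :
    ∃ (s : ℕ) (a : Fin s → F) (c β : Fin s → ℝ),
      ∀ z (α : ℝ), g z ≤ α ↔ ∀ i, ⟪a i, z⟫ + α * c i ≤ β i := by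
  obtain ⟨s, b, β, hE⟩ := hg
  choose a c hb using fun i => (b i).exists_inner_add_mul_eq
  exact ⟨s, a, c, β, fun z α =>
    (Set.ext_iff.1 hE (z, α)).trans (by simp only [mem_ofPred_eq, hb])⟩

lemma convex_epigraph_of_le_iff {ι : Type*} {g : F → EReal} {a : ι → F} {c β : ι → ℝ}
    (hE : ∀ z (α : ℝ), g z ≤ α ↔ ∀ i, ⟪a i, z⟫ + α * c i ≤ β i) :
    Convex ℝ {p : F × ℝ | g p.1 ≤ (p.2 : EReal)} := by
  have hepi : {p : F × ℝ | g p.1 ≤ (p.2 : EReal)} =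
      ⋂ i, {p : F × ℝ | ⟪a i, p.1⟫ + p.2 * c i ≤ β i} := by
    ext p
    simp [hE]
  rw [hepi]
  exact convex_iInter fun i => convex_inner_add_mul_le _ _ _

lemma inner_add_mul_le_zero_of_subderiv_lt {g : F → EReal} {x w a : F} {ρ c β γ : ℝ}
    (hx : g x = ρ) (hepi : ∀ z (α : ℝ), g z ≤ α → ⟪a, z⟫ + α * c ≤ β)
    (hact : ⟪a, x⟫ + ρ * c = β) (hγ : subderiv g x w < γ) : ⟪a, w⟫ + γ * c ≤ 0 := by
  have hclosed : IsClosed {y : F | ⟪a, y⟫ + γ * c ≤ 0} := isClosed_le (by fun_prop) (by fun_prop)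
  refine hclosed.mem_of_frequently_of_tendsto
    ((frequently_lt_of_subderiv_lt hx hγ).mono fun p ⟨hp, hlt⟩ => ?_) tendsto_snd
  have h := hepi _ _ hlt.le
  rw [inner_add_right, real_inner_smul_right] at h
  refine nonpos_of_mul_nonpos_right ?_ hp
  linarith

lemma inner_add_mul_le_zero_of_mem_Kcone {g : F → EReal} {x v w a : F} {ρ c β : ℝ}
    (hx : g x = ρ) (hepi : ∀ z (α : ℝ), g z ≤ α → ⟪a, z⟫ + α * c ≤ β)
    (hact : ⟪a, x⟫ + ρ * c = β) (hw : w ∈ Kcone g x v) : ⟪a, w⟫ + ⟪v, w⟫ * c ≤ 0 := by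
  refine le_of_tendsto (x := 𝓝[>] ⟪v, w⟫)
    ((Continuous.tendsto (f := fun γ : ℝ => ⟪a, w⟫ + γ * c) (by fun_prop) _).mono_left
      nhdsWithin_le_nhds) ?_
  filter_upwards [self_mem_nhdsWithin] with γ hγ
  refine inner_add_mul_le_zero_of_subderiv_lt hx hepi hact ?_
  rw [show subderiv g x w = ⟪v, w⟫ from hw]
  exact_mod_cast hγ

variable {ι : Type*} {g : F → EReal} {a : ι → F} {c β : ι → ℝ} {zb lb : F} {r : ℝ}

lemma exists_pos_mem_subdiff_add_smul [Finite ι]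
    (hE : ∀ z (α : ℝ), g z ≤ α ↔ ∀ i, ⟪a i, z⟫ + α * c i ≤ β i) (hr : g zb = r)
    (hl : lb ∈ subdiff g zb) {w : F}
    (hw : ∀ i, ⟪a i, zb⟫ + r * c i = β i → ⟪a i, w⟫ + ⟪lb, w⟫ * c i ≤ 0) :
    ∃ t : ℝ, 0 < t ∧ lb ∈ subdiff g (zb + t • w) := by
  have hzb : ∀ i, ⟪a i, zb⟫ + r * c i ≤ β i := (hE zb r).1 hr.le
  obtain ⟨t, ht, hpos⟩ := ((eventually_forall_add_mul_le hzb hw).and self_mem_nhdsWithin).exists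
  refine ⟨t, hpos, (mem_subdiff_iff_le hr hl).2 ((hE _ _).2 fun i => ?_)⟩
  rw [add_sub_cancel_left, inner_add_right, real_inner_smul_right, real_inner_smul_right]
  linarith [ht i]

lemma add_smul_mem_subdiff_of_active
    (hE : ∀ z (α : ℝ), g z ≤ α ↔ ∀ i, ⟪a i, z⟫ + α * c i ≤ β i) (hr : g zb = r)
    (hl : lb ∈ subdiff g zb) {i : ι} (hact : ⟪a i, zb⟫ + r * c i = β i) {t : ℝ} (ht : 0 ≤ t)
    (htc : 0 ≤ 1 + t * c i) : lb + t • (a i + c i • lb) ∈ subdiff g zb := by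
  intro x
  have hlx := hl x
  rw [hr] at hlx ⊢
  cases hgx : g x using EReal.rec with
  | bot => simp [hgx, ← EReal.coe_add] at hlx
  | top => exact le_top
  | coe σ =>
    have hax := (hE x σ).1 hgx.le i
    rw [hgx, ← EReal.coe_add, EReal.coe_le_coe_iff] at hlx
    rw [← EReal.coe_add, EReal.coe_le_coe_iff]
    simp only [inner_add_left, real_inner_smul_left, inner_sub_right] at hlx ⊢
    have hgap : 0 ≤ σ - r - (⟪lb, x⟫ - ⟪lb, zb⟫) := by linarith
    have hai : ⟪a i, x⟫ - ⟪a i, zb⟫ ≤ -((σ - r) * c i) := by linarith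
    nlinarith [mul_le_mul_of_nonneg_left hai ht, mul_nonneg hgap htc]

lemma mem_Kcone_fconj_of_active
    (hE : ∀ z (α : ℝ), g z ≤ α ↔ ∀ i, ⟪a i, z⟫ + α * c i ≤ β i) (hr : g zb = r)
    (hl : lb ∈ subdiff g zb) {i : ι} (hact : ⟪a i, zb⟫ + r * c i = β i) :
    a i + c i • lb ∈ Kcone (fconj g) lb zb := by
  obtain ⟨t, ht, htc⟩ : ∃ t : ℝ, 0 < t ∧ 0 ≤ 1 + t * c i := by
    have hpos : 0 < 1 + |c i| := by positivity
    have hle : |c i / (1 + |c i|)| ≤ 1 := by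
      rw [abs_div, abs_of_pos hpos, div_le_one hpos]
      linarith
    refine ⟨(1 + |c i|)⁻¹, inv_pos.2 hpos, ?_⟩
    rw [← div_eq_inv_mul]
    linarith [neg_abs_le (c i / (1 + |c i|))]
  exact mem_Kcone_of_mem_subdiff_add_smul (convex_epigraph_fconj g)
    (fconj_eq_of_mem_subdiff hr hl) (mem_subdiff_fconj hr hl) ht
    (mem_subdiff_fconj hr (add_smul_mem_subdiff_of_active hE hr hl hact ht.le htc))

end

/-- Polar relation of critical cones:
`K_g(zb,lb) = (K_{g*}(lb,zb))*`. -/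
theorem stmt6 {m : ℕ} (g : EuclideanSpace ℝ (Fin m) → EReal) (hg : IsPolyhedralFn g)
    (zb lb : EuclideanSpace ℝ (Fin m)) (hl : lb ∈ subdiff g zb) :
    Kcone g zb lb = polarCone (Kcone (fconj g) lb zb) := by
  obtain ⟨hfin, hbot, hpoly⟩ := hg
  obtain ⟨s, a, c, β, hE⟩ := exists_le_iff_of_isPolyhedralSet_epigraph hpoly
  obtain ⟨r, hr⟩ := exists_eq_coe_of_mem_subdiff hfin (hbot zb) hl
  refine Subset.antisymm (fun w hw => ?_) (fun w hw => ?_)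
  · obtain ⟨t, ht, hmem⟩ := exists_pos_mem_subdiff_add_smul hE hr hl fun i hi =>
      inner_add_mul_le_zero_of_mem_Kcone hr (fun z α h => (hE z α).1 h i) hi hw
    obtain ⟨σ, hσ⟩ := exists_eq_coe_of_mem_subdiff hfin (hbot _) hmem
    exact mem_polarCone_Kcone_of_add_smul_mem_subdiff (fconj_eq_of_mem_subdiff hr hl) ht
      (mem_subdiff_fconj hσ hmem)
  · obtain ⟨t, ht, hmem⟩ := exists_pos_mem_subdiff_add_smul hE hr hl fun i hi => by
      have h := hw _ (mem_Kcone_fconj_of_active hE hr hl hi)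
      rw [inner_add_right, real_inner_smul_right, real_inner_comm (a i), real_inner_comm lb] at h
      linarith
    exact mem_Kcone_of_mem_subdiff_add_smul (convex_epigraph_of_le_iff hE) hr hl ht hmem
end
end

section
/- Let g : ℝᵐ → ℝ ∪ {∞} be a polyhedral function and (z̄, λ̄) ∈ gph ∂g. Then there exists r > 0 such that for all (z, λ) ∈ (gph ∂g) ∩ B_r(z̄, λ̄): (i) K_g(z,λ) ⊆ K_g(z̄,λ̄) − K_g(z̄,λ̄), and (ii) K_g(z̄,λ̄) ∩ (−K_g(z̄,λ̄)) ⊆ K_g(z,λ). -/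
open Filter Topology Set Metric

noncomputable section

/-!
Write the epigraph of `g` as `{p | bᵢ p ≤ βᵢ}`. If `l ∈ ∂g z`, then `∂g z` is the set of slopes `μ`
with `⟪μ, u⟫ ≤ q` on the cone `{(u, q) | bᵢ (u, q) ≤ 0 for i active at (z, g z)}`, and `K_g(z, l)`
is the set of `w` with `(w, ⟪l, w⟫)` in that cone. Along the graph of `∂g`, `g` is continuous, so
near `(z̄, λ̄)` the active set can only shrink. Both `∂g z` and the faces of it exposed by critical
directions range over finitely many closed sets, so `λ̄` eventually lies in each of them that
contains `l`: hence `λ̄ ∈ ∂g z` and `⟪λ̄, w⟫ = ⟪l, w⟫` for `w ∈ K_g(z, l)`. For (i), write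
`w = (w + t (z - z̄)) - t (z - z̄)` with `t` large; for (ii), a direction in the lineality space of
`K_g(z̄, λ̄)` makes every constraint active at `z̄` tight, hence also those active at `z`.
-/

open scoped RealInnerProductSpace

namespace EReal

lemma coe_le_sub_mul_inv_iff {t : ℝ} (ht : 0 < t) (a : EReal) (ρ q : ℝ) :
    (q : EReal) ≤ (a - ρ) * ((t⁻¹ : ℝ) : EReal) ↔ ((ρ + t * q : ℝ) : EReal) ≤ a := by
  have ht' : (0 : EReal) < ((t⁻¹ : ℝ) : EReal) := by exact_mod_cast inv_pos.mpr ht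
  induction a using EReal.rec with
  | bot => simp only [bot_sub, bot_mul_of_pos ht', le_bot_iff, coe_ne_bot]
  | top => simp only [top_sub_coe, top_mul_of_pos ht', le_top]
  | coe α =>
    rw [← coe_sub, ← coe_mul, EReal.coe_le_coe_iff, EReal.coe_le_coe_iff, le_mul_inv_iff₀ ht]
    constructor <;> intro h <;> linarith

lemma sub_mul_inv_le_coe_iff {t : ℝ} (ht : 0 < t) (a : EReal) (ρ q : ℝ) :
    (a - ρ) * ((t⁻¹ : ℝ) : EReal) ≤ q ↔ a ≤ ((ρ + t * q : ℝ) : EReal) := by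
  have ht' : (0 : EReal) < ((t⁻¹ : ℝ) : EReal) := by exact_mod_cast inv_pos.mpr ht
  induction a using EReal.rec with
  | bot => simp only [bot_sub, bot_mul_of_pos ht', bot_le]
  | top => simp only [top_sub_coe, top_mul_of_pos ht', top_le_iff, coe_ne_top]
  | coe α =>
    rw [← coe_sub, ← coe_mul, EReal.coe_le_coe_iff, EReal.coe_le_coe_iff, mul_inv_le_iff₀ ht]
    constructor <;> intro h <;> linarith

end EReal

lemma IsClosed.eventually_imp_mem {X : Type*} [TopologicalSpace X] {S : Set X} (hS : IsClosed S)
    (x : X) : ∀ᶠ y in 𝓝 x, y ∈ S → x ∈ S := by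
  by_cases hx : x ∈ S
  · exact .of_forall fun _ _ => hx
  · filter_upwards [hS.isOpen_compl.mem_nhds hx] with y hy hyS using absurd hyS hy

lemma eventually_forall_mem_imp_mem {X κ : Type*} [TopologicalSpace X] [Finite κ]
    {S : κ → Set X} (hS : ∀ k, IsClosed (S k)) (x : X) :
    ∀ᶠ y in 𝓝 x, ∀ k, y ∈ S k → x ∈ S k :=
  eventually_all.2 fun k => (hS k).eventually_imp_mem x

lemma eventually_forall_add_smul_le {F ι : Type*} [AddCommGroup F] [Module ℝ F] [Finite ι]
    (a : ι → F →ₗ[ℝ] ℝ) (γ : ι → ℝ) {p u : F} (hp : ∀ i, a i p ≤ γ i)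
    (hu : ∀ i, a i p = γ i → a i u ≤ 0) :
    ∀ᶠ t in 𝓝[>] (0 : ℝ), ∀ i, a i (p + t • u) ≤ γ i := by
  refine eventually_all.2 fun i => ?_
  simp only [map_add, map_smul, smul_eq_mul]
  rcases (hp i).eq_or_lt with hact | hlt
  · filter_upwards [self_mem_nhdsWithin] with t (ht : 0 < t)
    nlinarith [hu i hact]
  · have hcont : Continuous fun t : ℝ => a i p + t * a i u := by fun_prop
    refine nhdsWithin_le_nhds ((hcont.tendsto' 0 (a i p) (by simp)).eventually
      (eventually_le_nhds hlt))

section Cones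

variable {F ι : Type*} [TopologicalSpace F] [AddCommGroup F] [Module ℝ F]

def polyCone (b : ι → F →L[ℝ] ℝ) (A : Set ι) : Set F := {v | ∀ i ∈ A, b i v ≤ 0}

def activeSet (b : ι → F →L[ℝ] ℝ) (β : ι → ℝ) (p : F) : Set ι := {i | b i p = β i}

def polyFace (b : ι → F →L[ℝ] ℝ) (A J : Set ι) : Set F :=
  {v | v ∈ polyCone b A ∧ ∀ i ∈ J, b i v = 0}

lemma eventually_add_smul_mem_polyCone [Finite ι] {b : ι → F →L[ℝ] ℝ} {A : Set ι} {v u : F}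
    (hv : v ∈ polyCone b A) (hu : ∀ i ∈ A, b i v = 0 → b i u ≤ 0) :
    ∀ᶠ t in 𝓝[>] (0 : ℝ), v + t • u ∈ polyCone b A :=
  (eventually_forall_add_smul_le (fun i : A => (b i : F →ₗ[ℝ] ℝ)) 0 (fun i => hv i i.2)
    (fun i => hu i i.2)).mono fun _ ht i hi => ht ⟨i, hi⟩

end Cones

section Slopes

variable {E : Type*} [NormedAddCommGroup E] [InnerProductSpace ℝ E]

def slopeSet (C : Set (E × ℝ)) : Set E := {μ | ∀ v ∈ C, ⟪μ, v.1⟫ ≤ v.2}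

def exposedSet (C : Set (E × ℝ)) : Set E := {μ | ∀ v ∈ C, ⟪μ, v.1⟫ = v.2}

lemma isClosed_slopeSet (C : Set (E × ℝ)) : IsClosed (slopeSet C) := by
  simp only [slopeSet, Set.ofPred_forall]
  exact isClosed_iInter fun v => isClosed_iInter fun _ =>
    isClosed_le (continuous_id.inner continuous_const) continuous_const

lemma isClosed_exposedSet (C : Set (E × ℝ)) : IsClosed (exposedSet C) := by
  simp only [exposedSet, Set.ofPred_forall]
  exact isClosed_iInter fun v => isClosed_iInter fun _ =>
    isClosed_eq (continuous_id.inner continuous_const) continuous_const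

lemma mem_exposedSet_polyFace {ι : Type*} [Finite ι] {b : ι → E × ℝ →L[ℝ] ℝ} {A : Set ι}
    {μ : E} {v₀ : E × ℝ} (hμ : μ ∈ slopeSet (polyCone b A)) (hv₀ : v₀ ∈ polyCone b A)
    (heq : ⟪μ, v₀.1⟫ = v₀.2) : μ ∈ exposedSet (polyFace b A {i | b i v₀ = 0}) := by
  intro v ⟨hvA, hvJ⟩
  refine le_antisymm (hμ v hvA) ?_
  -- `v₀` is relatively interior to the face, so `v₀ + ε (v₀ - v)` stays in the cone for small `ε`
  have hmem : ∀ᶠ ε in 𝓝[>] (0 : ℝ), v₀ + ε • (v₀ - v) ∈ polyCone b A :=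
    eventually_add_smul_mem_polyCone hv₀ fun i _ hi => by simp [hi, hvJ i hi]
  obtain ⟨ε, hε, hεpos⟩ := (hmem.and self_mem_nhdsWithin).exists
  have := hμ _ hε
  simp only [Prod.fst_add, Prod.snd_add, Prod.smul_fst, Prod.smul_snd, Prod.fst_sub,
    Prod.snd_sub, inner_add_right, inner_smul_right, inner_sub_right, smul_eq_mul, heq] at this
  have hεpos : (0 : ℝ) < ε := hεpos
  nlinarith

end Slopes

section PolyhedralFunction

variable {E ι : Type*} [NormedAddCommGroup E] [InnerProductSpace ℝ E]
  {g : E → EReal} {b : ι → E × ℝ →L[ℝ] ℝ} {β : ι → ℝ} {z z' zb w μ l lb : E} {ρ ρ' ρb : ℝ}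

lemma eventually_le_add_mul_of_mem_polyCone [Finite ι]
    (hepi : ∀ p : E × ℝ, g p.1 ≤ p.2 ↔ ∀ i, b i p ≤ β i) (hz : g z = ρ) {v : E × ℝ}
    (hv : v ∈ polyCone b (activeSet b β (z, ρ))) :
    ∀ᶠ t in 𝓝[>] (0 : ℝ), g (z + t • v.1) ≤ ((ρ + t * v.2 : ℝ) : EReal) := by
  have hp : ∀ i, b i (z, ρ) ≤ β i := (hepi (z, ρ)).1 hz.le
  filter_upwards [eventually_forall_add_smul_le (fun i => (b i : E × ℝ →ₗ[ℝ] ℝ)) β hp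
    fun i hi => hv i hi] with t ht
  simpa using (hepi _).2 ht

lemma mem_subdiff_iff_mem_slopeSet [Finite ι]
    (hepi : ∀ p : E × ℝ, g p.1 ≤ p.2 ↔ ∀ i, b i p ≤ β i) (hz : g z = ρ) :
    μ ∈ subdiff g z ↔ μ ∈ slopeSet (polyCone b (activeSet b β (z, ρ))) := by
  constructor
  · intro hμ v hv
    obtain ⟨t, hle, ht⟩ := ((eventually_le_add_mul_of_mem_polyCone hepi hz hv).and
      self_mem_nhdsWithin).exists
    have hsub := (hμ (z + t • v.1)).trans hle
    rw [hz, add_sub_cancel_left, inner_smul_right, ← EReal.coe_add,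
      EReal.coe_le_coe_iff] at hsub
    exact le_of_mul_le_mul_left (by linarith) (show (0 : ℝ) < t from ht)
  · intro hμ x
    rw [hz, ← EReal.le_of_forall_lt_iff_le]
    intro α hα
    have hx : ∀ i, b i (x, α) ≤ β i := (hepi (x, α)).1 hα.le
    have := hμ ((x, α) - (z, ρ)) fun i hi => by
      rw [map_sub, sub_nonpos, hi]
      exact hx i
    rw [← EReal.coe_add, EReal.coe_le_coe_iff]
    simp only [Prod.fst_sub, Prod.snd_sub] at this
    linarith

lemma inner_le_subderiv_s8 (hμ : μ ∈ subdiff g z) (hz : g z = ρ) :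
    ((⟪μ, w⟫ : ℝ) : EReal) ≤ subderiv g z w := by
  have hlim : Tendsto (fun p : ℝ × E => ((⟪μ, p.2⟫ : ℝ) : EReal)) (𝓝[>] 0 ×ˢ 𝓝 w)
      (𝓝 (⟪μ, w⟫ : ℝ)) :=
    (continuous_coe_real_ereal.tendsto _).comp
      (((continuous_const.inner continuous_id).tendsto w).comp tendsto_snd)
  rw [← hlim.liminf_eq]
  refine liminf_le_liminf ?_
  filter_upwards [prod_mem_prod self_mem_nhdsWithin univ_mem] with p hp
  rw [hz, EReal.coe_le_sub_mul_inv_iff hp.1]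
  simpa [hz, inner_smul_right] using hμ (z + p.1 • p.2)

lemma subderiv_le_of_mem_polyCone [Finite ι]
    (hepi : ∀ p : E × ℝ, g p.1 ≤ p.2 ↔ ∀ i, b i p ≤ β i) (hz : g z = ρ) {q : ℝ}
    (hwq : (w, q) ∈ polyCone b (activeSet b β (z, ρ))) : subderiv g z w ≤ q := by
  refine liminf_le_of_frequently_le ?_
  have hpair : Tendsto (fun t : ℝ => (t, w)) (𝓝[>] 0) (𝓝[>] 0 ×ˢ 𝓝 w) :=
    tendsto_id.prodMk tendsto_const_nhds
  refine hpair.frequently (Eventually.frequently ?_)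
  filter_upwards [eventually_le_add_mul_of_mem_polyCone hepi hz hwq, self_mem_nhdsWithin]
    with t hle ht
  rwa [hz, EReal.sub_mul_inv_le_coe_iff ht]

lemma coe_le_subderiv_of_pos (hepi : ∀ p : E × ℝ, g p.1 ≤ p.2 ↔ ∀ i, b i p ≤ β i)
    (hz : g z = ρ) {i : ι} (hi : i ∈ activeSet b β (z, ρ)) {q : ℝ} (hpos : 0 < b i (w, q)) :
    (q : EReal) ≤ subderiv g z w := by
  have hcont : Continuous fun w' : E => b i (w', q) :=
    (b i).continuous.comp (continuous_id.prodMk continuous_const)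
  unfold subderiv
  refine Filter.le_liminf_of_le (by isBoundedDefault) ?_
  filter_upwards [prod_mem_prod self_mem_nhdsWithin
    ((hcont.tendsto w).eventually (eventually_gt_nhds hpos))] with p ⟨ht, hp⟩
  rw [hz, EReal.coe_le_sub_mul_inv_iff ht]
  by_contra! hlt
  have hle := (hepi (z + p.1 • p.2, ρ + p.1 * q)).1 hlt.le i
  have hsplit : (z + p.1 • p.2, ρ + p.1 * q) = (z, ρ) + p.1 • (p.2, q) := by simp
  rw [hsplit, map_add, map_smul, hi, smul_eq_mul] at hle
  nlinarith [mul_pos (show (0 : ℝ) < p.1 from ht) hp]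

lemma mem_Kcone_iff [Finite ι] (hepi : ∀ p : E × ℝ, g p.1 ≤ p.2 ↔ ∀ i, b i p ≤ β i)
    (hμ : μ ∈ subdiff g z) (hz : g z = ρ) :
    w ∈ Kcone g z μ ↔ (w, ⟪μ, w⟫) ∈ polyCone b (activeSet b β (z, ρ)) := by
  refine ⟨fun hw i hi => ?_, fun hw =>
    le_antisymm (subderiv_le_of_mem_polyCone hepi hz hw) (inner_le_subderiv_s8 hμ hz)⟩
  by_contra! hpos
  have hcont : Continuous fun q : ℝ => b i (w, q) :=
    (b i).continuous.comp (continuous_const.prodMk continuous_id)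
  obtain ⟨q, hq, hqgt⟩ := (((hcont.tendsto _).eventually (eventually_gt_nhds hpos)).filter_mono
    nhdsWithin_le_nhds |>.and (self_mem_nhdsWithin : Ioi ⟪μ, w⟫ ∈ 𝓝[>] ⟪μ, w⟫)).exists
  have := coe_le_subderiv_of_pos hepi hz hi hq
  rw [show subderiv g z w = _ from hw, EReal.coe_le_coe_iff] at this
  exact absurd hqgt (not_lt.2 this)

lemma inner_sub_le_of_mem_subdiff (hμ : μ ∈ subdiff g z) (hz : g z = ρ) (hz' : g z' = ρ') :
    ⟪μ, z' - z⟫ ≤ ρ' - ρ := by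
  have h := hμ z'
  rw [hz, hz', ← EReal.coe_add, EReal.coe_le_coe_iff] at h
  linarith

lemma sub_eq_inner_of_mem_subdiff (hμz : μ ∈ subdiff g z) (hμz' : μ ∈ subdiff g z')
    (hz : g z = ρ) (hz' : g z' = ρ') : ρ' - ρ = ⟪μ, z' - z⟫ := by
  have h := inner_sub_le_of_mem_subdiff hμz' hz' hz
  rw [← neg_sub z' z, inner_neg_right] at h
  linarith [inner_sub_le_of_mem_subdiff hμz hz hz']

lemma Kcone_subset_Kcone_sub_Kcone [Finite ι] (hepi : ∀ p : E × ℝ, g p.1 ≤ p.2 ↔ ∀ i, b i p ≤ β i)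
    (hz : g z = ρ) (hzb : g zb = ρb) (hl : l ∈ subdiff g z) (hlb : lb ∈ subdiff g zb)
    (hlbz : lb ∈ subdiff g z) (hA : activeSet b β (z, ρ) ⊆ activeSet b β (zb, ρb))
    (hinner : ∀ w ∈ Kcone g z l, ⟪lb, w⟫ = ⟪l, w⟫) :
    Kcone g z l ⊆ {w | ∃ a ∈ Kcone g zb lb, ∃ b ∈ Kcone g zb lb, w = a - b} := by
  intro w hw
  have hwA := (mem_Kcone_iff hepi hl hz).1 hw
  set v : E × ℝ := (z, ρ) - (zb, ρb) with hv
  have hlbv : ⟪lb, v.1⟫ = v.2 := (sub_eq_inner_of_mem_subdiff hlb hlbz hzb hz).symm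
  have hp : ∀ i, b i (z, ρ) ≤ β i := (hepi (z, ρ)).1 hz.le
  have hbv : ∀ i ∈ activeSet b β (zb, ρb), b i v = b i (z, ρ) - β i := fun i hi => by
    rw [hv, map_sub, hi]
  -- far enough along `v`, the constraints active at `zb` but not at `z` become slack
  have hfar : ∀ᶠ t in atTop, ∀ i ∈ activeSet b β (zb, ρb), b i (w, ⟪l, w⟫) + t * b i v ≤ 0 := by
    refine eventually_all.2 fun i => ?_
    by_cases hi : i ∈ activeSet b β (z, ρ)
    · refine .of_forall fun t _ => ?_
      rw [hbv i (hA hi), hi, sub_self, mul_zero, add_zero]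
      exact hwA i hi
    · refine (eventually_imp_distrib_left ..).2 fun hib => ?_
      have hneg : b i v < 0 := by
        rw [hbv i hib]
        exact sub_neg.2 ((hp i).lt_of_ne hi)
      exact (tendsto_atBot_add_const_left _ _
        (tendsto_id.atTop_mul_const_of_neg hneg)).eventually (eventually_le_atBot 0)
  obtain ⟨t, ht, ht0⟩ := (hfar.and (eventually_ge_atTop 0)).exists
  refine ⟨w + t • v.1, ?_, t • v.1, ?_, by abel⟩
  · refine (mem_Kcone_iff hepi hlb hzb).2 fun i hi => ?_
    have hsplit : (w + t • v.1, ⟪lb, w + t • v.1⟫) = (w, ⟪l, w⟫) + t • v := by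
      ext <;> simp [inner_add_right, inner_smul_right, hinner w hw, hlbv]
    rw [hsplit, map_add, map_smul, smul_eq_mul]
    exact ht i hi
  · refine (mem_Kcone_iff hepi hlb hzb).2 fun i hi => ?_
    have hsplit : (t • v.1, ⟪lb, t • v.1⟫) = t • v := by
      ext <;> simp [inner_smul_right, hlbv]
    rw [hsplit, map_smul, smul_eq_mul, hbv i hi]
    exact mul_nonpos_of_nonneg_of_nonpos ht0 (sub_nonpos.2 (hp i))

lemma lineality_subset_Kcone [Finite ι] (hepi : ∀ p : E × ℝ, g p.1 ≤ p.2 ↔ ∀ i, b i p ≤ β i)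
    (hz : g z = ρ) (hzb : g zb = ρb) (hl : l ∈ subdiff g z) (hlb : lb ∈ subdiff g zb)
    (hA : activeSet b β (z, ρ) ⊆ activeSet b β (zb, ρb)) :
    Kcone g zb lb ∩ {w | -w ∈ Kcone g zb lb} ⊆ Kcone g z l := by
  rintro w ⟨hw, hnw⟩
  have hzero : ∀ i ∈ activeSet b β (zb, ρb), b i (w, ⟪lb, w⟫) = 0 := fun i hi => by
    have h₁ := (mem_Kcone_iff hepi hlb hzb).1 hw i hi
    have h₂ := (mem_Kcone_iff hepi hlb hzb).1 hnw i hi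
    rw [inner_neg_right, ← Prod.neg_mk, map_neg] at h₂
    linarith
  have hslope := (mem_subdiff_iff_mem_slopeSet hepi hz).1 hl
  have h₁ := hslope (w, ⟪lb, w⟫) fun i hi => (hzero i (hA hi)).le
  have h₂ := hslope (-w, -⟪lb, w⟫) fun i hi => by
    rw [← Prod.neg_mk, map_neg, hzero i (hA hi), neg_zero]
  simp only [inner_neg_right, neg_le_neg_iff] at h₂
  refine (mem_Kcone_iff hepi hl hz).2 fun i hi => ?_
  rw [le_antisymm h₁ h₂, hzero i (hA hi)]

def subdiffGraph (g : E → EReal) : Set (E × E) := {q | q.2 ∈ subdiff g q.1}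

lemma coe_toReal_of_mem_subdiff {x : E} (hx : g x ≠ ⊤) (hz : g z ≠ ⊥) (hμ : μ ∈ subdiff g z) :
    ((g z).toReal : EReal) = g z := by
  refine EReal.coe_toReal (fun htop => hx ?_) hz
  simpa [htop] using hμ x

lemma tendsto_toReal_nhdsWithin_subdiffGraph (htop : ∃ x, g x ≠ ⊤) (hbot : ∀ x, g x ≠ ⊥)
    (hlb : lb ∈ subdiff g zb) :
    Tendsto (fun q : E × E => (g q.1).toReal) (𝓝[subdiffGraph g] (zb, lb))
      (𝓝 (g zb).toReal) := by
  obtain ⟨x, hx⟩ := htop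
  have hval : ∀ q ∈ subdiffGraph g, g q.1 = ((g q.1).toReal : EReal) := fun q hq =>
    (coe_toReal_of_mem_subdiff hx (hbot _) hq).symm
  have hzb : g zb = ((g zb).toReal : EReal) := hval (zb, lb) hlb
  have hlim : ∀ μ : E × E → E, Continuous μ →
      Tendsto (fun q => (g zb).toReal + ⟪μ q, q.1 - zb⟫) (𝓝[subdiffGraph g] (zb, lb))
        (𝓝 (g zb).toReal) := fun μ hμ =>
    ((continuous_const.add (hμ.inner (continuous_fst.sub continuous_const))).tendsto'
      (zb, lb) _ (by simp)).mono_left nhdsWithin_le_nhds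
  refine tendsto_of_tendsto_of_tendsto_of_le_of_le' (hlim (fun _ => lb) continuous_const)
    (hlim _ continuous_snd) ?_ ?_ <;> filter_upwards [self_mem_nhdsWithin] with q hq
  · linarith [inner_sub_le_of_mem_subdiff hlb hzb (hval q hq)]
  · have h := inner_sub_le_of_mem_subdiff hq (hval q hq) hzb
    rw [← neg_sub q.1 zb, inner_neg_right] at h
    linarith

lemma eventually_activeSet_subset [Finite ι] (htop : ∃ x, g x ≠ ⊤) (hbot : ∀ x, g x ≠ ⊥)
    (hlb : lb ∈ subdiff g zb) :
    ∀ᶠ q in 𝓝[subdiffGraph g] (zb, lb),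
      activeSet b β (q.1, (g q.1).toReal) ⊆ activeSet b β (zb, (g zb).toReal) := by
  have hp : Tendsto (fun q : E × E => (q.1, (g q.1).toReal)) (𝓝[subdiffGraph g] (zb, lb))
      (𝓝 (zb, (g zb).toReal)) :=
    ((continuous_fst.tendsto _).mono_left nhdsWithin_le_nhds).prodMk_nhds
      (tendsto_toReal_nhdsWithin_subdiffGraph htop hbot hlb)
  refine eventually_all.2 fun i => ?_
  by_cases hi : i ∈ activeSet b β (zb, (g zb).toReal)
  · exact .of_forall fun _ _ => hi
  · filter_upwards [((b i).continuous.tendsto _).comp hp |>.eventually (eventually_ne_nhds hi)]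
      with q hq hqi using absurd hqi hq

lemma tendsto_snd_nhdsWithin_subdiffGraph :
    Tendsto Prod.snd (𝓝[subdiffGraph g] (zb, lb)) (𝓝 lb) :=
  (continuous_snd.tendsto _).mono_left nhdsWithin_le_nhds

lemma eventually_mem_subdiff [Finite ι] (hepi : ∀ p : E × ℝ, g p.1 ≤ p.2 ↔ ∀ i, b i p ≤ β i)
    (htop : ∃ x, g x ≠ ⊤) (hbot : ∀ x, g x ≠ ⊥) :
    ∀ᶠ q in 𝓝[subdiffGraph g] (zb, lb), lb ∈ subdiff g q.1 := by
  obtain ⟨x, hx⟩ := htop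
  filter_upwards [tendsto_snd_nhdsWithin_subdiffGraph.eventually (eventually_forall_mem_imp_mem
    (fun A : Set ι => isClosed_slopeSet (polyCone b A)) lb), self_mem_nhdsWithin] with q hq hqG
  have hz := (coe_toReal_of_mem_subdiff hx (hbot _) hqG).symm
  exact (mem_subdiff_iff_mem_slopeSet hepi hz).2 (hq _ ((mem_subdiff_iff_mem_slopeSet hepi hz).1 hqG))

lemma eventually_inner_eq_of_mem_Kcone [Finite ι]
    (hepi : ∀ p : E × ℝ, g p.1 ≤ p.2 ↔ ∀ i, b i p ≤ β i)
    (htop : ∃ x, g x ≠ ⊤) (hbot : ∀ x, g x ≠ ⊥) :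
    ∀ᶠ q in 𝓝[subdiffGraph g] (zb, lb), ∀ w ∈ Kcone g q.1 q.2, ⟪lb, w⟫ = ⟪q.2, w⟫ := by
  obtain ⟨x, hx⟩ := htop
  filter_upwards [tendsto_snd_nhdsWithin_subdiffGraph.eventually (eventually_forall_mem_imp_mem
    (fun AJ : Set ι × Set ι => isClosed_exposedSet (polyFace b AJ.1 AJ.2)) lb),
    self_mem_nhdsWithin] with q hq hqG w hw
  have hz := (coe_toReal_of_mem_subdiff hx (hbot _) hqG).symm
  have hwA := (mem_Kcone_iff hepi hqG hz).1 hw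
  exact hq (_, _) (mem_exposedSet_polyFace ((mem_subdiff_iff_mem_slopeSet hepi hz).1 hqG) hwA rfl)
    _ ⟨hwA, fun _ hi => hi⟩

end PolyhedralFunction

/-- local inclusions for critical cones of a polyhedral function. -/
theorem stmt8 {m : ℕ} (g : EuclideanSpace ℝ (Fin m) → EReal) (hg : IsPolyhedralFn g)
    (zb lb : EuclideanSpace ℝ (Fin m)) (hl : lb ∈ subdiff g zb) :
    ∃ r > (0 : ℝ), ∀ z l : EuclideanSpace ℝ (Fin m), l ∈ subdiff g z →
      dist (z, l) (zb, lb) ≤ r →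
      Kcone g z l ⊆ {w | ∃ a ∈ Kcone g zb lb, ∃ b ∈ Kcone g zb lb, w = a - b} ∧
      Kcone g zb lb ∩ {w | -w ∈ Kcone g zb lb} ⊆ Kcone g z l := by
  obtain ⟨htop, hbot, s, b, β, hepi⟩ := hg
  set B : Fin s → EuclideanSpace ℝ (Fin m) × ℝ →L[ℝ] ℝ := fun i => (b i).toContinuousLinearMap
  have hepi' : ∀ p : EuclideanSpace ℝ (Fin m) × ℝ, g p.1 ≤ p.2 ↔ ∀ i, B i p ≤ β i := fun p =>
    Set.ext_iff.1 hepi p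
  obtain ⟨x, hx⟩ := htop
  have hzb := (coe_toReal_of_mem_subdiff hx (hbot zb) hl).symm
  have hlocal : ∀ᶠ q in 𝓝[subdiffGraph g] (zb, lb),
      Kcone g q.1 q.2 ⊆ {w | ∃ a ∈ Kcone g zb lb, ∃ b ∈ Kcone g zb lb, w = a - b} ∧
      Kcone g zb lb ∩ {w | -w ∈ Kcone g zb lb} ⊆ Kcone g q.1 q.2 := by
    filter_upwards [eventually_activeSet_subset (b := B) (β := β) ⟨x, hx⟩ hbot hl,
      eventually_mem_subdiff hepi' ⟨x, hx⟩ hbot, eventually_inner_eq_of_mem_Kcone hepi' ⟨x, hx⟩ hbot,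
      self_mem_nhdsWithin] with q hA hlbq hinner hq
    have hz := (coe_toReal_of_mem_subdiff hx (hbot _) hq).symm
    exact ⟨Kcone_subset_Kcone_sub_Kcone hepi' hz hzb hq hl hlbq hA hinner,
      lineality_subset_Kcone hepi' hz hzb hq hl hA⟩
  obtain ⟨ε, hε, hball⟩ := Metric.eventually_nhds_iff.1 (eventually_nhdsWithin_iff.1 hlocal)
  exact ⟨ε / 2, by positivity, fun z l hzl hdist => hball (y := (z, l)) (by linarith) hzl⟩
end
end

section
/- Let g : ℝᵐ → ℝ ∪ {∞} be a polyhedral function and (z̄, λ̄) ∈ gph ∂g. Then the tangent cone to gph ∂g at (z̄, λ̄) equals gph N_K, where K = K_g(z̄, λ̄) is the critical cone; equivalently, the graphical derivative of ∂g at z̄ for λ̄ is the normal cone mapping N_K. -/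
open Filter Topology Set Metric

noncomputable section

open scoped RealInnerProductSpace Pointwise

/-!
Near a point `z` of its domain a polyhedral function is `g (z + y) = g z + h y`, where `h` is
the sublinear function equal to `max_i ⟪a i, y⟫` on the polyhedral cone
`T = {y | ∀ k, ⟪y, b k⟫ ≤ 0}` and to `⊤` off it. Hence the subderivative of `g` at `z` is `h`,
and, both functions being convex, `∂g (z + w) = ∂h w` for small `w`; in particular
`∂g z = ∂h 0`.

Let `λ ∈ ∂h 0` and `K = {w | h w = ⟪λ, w⟫}`. One has `λ + u ∈ ∂h w` iff `λ + u ∈ ∂h 0`,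
`w ∈ T` and `h w ≤ ⟪λ + u, w⟫`, and `∂h 0 = conv {a i} + cone {b k}` by Farkas' lemma. For
small `u` this says exactly `w ∈ K` and `u ∈ N_K w`, by two finiteness arguments: a small
element of the polar cone of `K` has conic coefficients of total mass at most one
(Carathéodory), so `λ + u` stays in `∂h 0`; and `∂h 0` has finitely many faces, all closed,
so a face containing `λ + u` contains `λ`.
Finally `gph N_K` is a closed cone, hence its own tangent cone at the origin.
-/

theorem nonpos_of_forall_nonneg_mul_lt {c d : ℝ} (h : ∀ t : ℝ, 0 ≤ t → t * c < d) : c ≤ 0 := by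
  by_contra! hc
  have := h ((|d| + 1) / c) (by positivity)
  rw [div_mul_cancel₀ _ hc.ne'] at this
  linarith [le_abs_self d]

theorem sum_coe_sort_of_forall_notMem {M : Type*} [AddCommMonoid M] {ι : Type*} [Fintype ι]
    (A : Finset ι)
    {f : ι → M} (h : ∀ i ∉ A, f i = 0) : ∑ i : A, f i = ∑ i, f i :=
  (Finset.sum_coe_sort A f).trans (Finset.sum_subset (Finset.subset_univ A) fun i _ hi => h i hi)

theorem EReal.coe_add_le_coe_add_iff (γ : ℝ) {a b : EReal} : (γ : EReal) + a ≤ γ + b ↔ a ≤ b := by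
  refine ⟨fun h => ?_, fun h => add_le_add_right h _⟩
  have := add_le_add_right h ((-γ : ℝ) : EReal)
  rwa [← add_assoc, ← add_assoc, ← EReal.coe_add, neg_add_cancel, EReal.coe_zero, zero_add,
    zero_add] at this

theorem EReal.coe_add_coe_mul_sub_mul_inv (γ : ℝ) {t : ℝ} (ht : 0 < t) (e : EReal) :
    ((γ : EReal) + t * e - γ) * ((t⁻¹ : ℝ) : EReal) = e := by
  induction e using EReal.rec with
  | bot => simp [EReal.coe_mul_bot_of_pos ht, EReal.bot_mul_coe_of_pos (inv_pos.2 ht)]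
  | top => simp [EReal.coe_mul_top_of_pos ht, EReal.top_mul_coe_of_pos (inv_pos.2 ht)]
  | coe x =>
    norm_cast
    field_simp
    ring

theorem EReal.eq_of_forall_le_coe_iff_s10 {e e' : EReal} (h : ∀ r : ℝ, e ≤ r ↔ e' ≤ r) : e = e' :=
  le_antisymm (EReal.le_of_forall_lt_iff_le.1 fun r hr => (h r).2 hr.le)
    (EReal.le_of_forall_lt_iff_le.1 fun r hr => (h r).1 hr.le)

theorem eventually_mem_of_add_mem {G : Type*} [TopologicalSpace G] [AddZeroClass G]
    [ContinuousAdd G] {S : Set G} (hS : IsClosed S) (x : G) :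
    ∀ᶠ u in 𝓝 (0 : G), x + u ∈ S → x ∈ S := by
  by_cases hx : x ∈ S
  · exact Eventually.of_forall fun _ _ => hx
  have : Tendsto (x + ·) (𝓝 0) (𝓝 x) := by
    simpa using (continuous_const_add x).tendsto (0 : G)
  filter_upwards [this.eventually (hS.isOpen_compl.mem_nhds hx)] with u hu h
  exact absurd h hu

section FiniteCone

variable {F ι : Type*}

def finCone [AddCommMonoid F] [Module ℝ F] (s : Finset ι) (g : ι → F) : Set F :=
  {x | ∃ t : ι → ℝ, (∀ i ∈ s, 0 ≤ t i) ∧ x = ∑ i ∈ s, t i • g i}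

theorem finCone_mono [AddCommMonoid F] [Module ℝ F] {s s' : Finset ι} (h : s' ⊆ s) (g : ι → F) :
    finCone s' g ⊆ finCone s g := by
  classical
  rintro _ ⟨t, ht, rfl⟩
  refine ⟨fun i => if i ∈ s' then t i else 0, fun i _ => ?_, ?_⟩
  · dsimp only
    split_ifs with hi
    exacts [ht i hi, le_rfl]
  · simp [ite_smul, Finset.sum_ite_mem, Finset.inter_eq_right.2 h]

theorem convex_finCone [AddCommMonoid F] [Module ℝ F] (s : Finset ι) (g : ι → F) :
    Convex ℝ (finCone s g) := by
  rintro _ ⟨t, ht, rfl⟩ _ ⟨t', ht', rfl⟩ a b ha hb -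
  refine ⟨a • t + b • t', fun i hi => ?_, ?_⟩
  · simp only [Pi.add_apply, Pi.smul_apply, smul_eq_mul]
    exact add_nonneg (mul_nonneg ha (ht i hi)) (mul_nonneg hb (ht' i hi))
  · simp only [Finset.smul_sum, smul_smul, ← Finset.sum_add_distrib, ← add_smul]
    rfl

theorem smul_mem_finCone [AddCommMonoid F] [Module ℝ F] {s : Finset ι} {g : ι → F} {i : ι}
    (hi : i ∈ s) {a : ℝ} (ha : 0 ≤ a) : a • g i ∈ finCone s g := by
  classical
  refine ⟨Pi.single i a, fun j _ => ?_, ?_⟩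
  · by_cases hj : j = i
    · subst hj; simpa using ha
    · simp [hj]
  · simp [Pi.single_apply, ite_smul, hi]

/-- Conic Carathéodory theorem. -/
theorem exists_linearIndepOn_of_mem_finCone [AddCommGroup F] [Module ℝ F] {s : Finset ι}
    {g : ι → F} {x : F} (hx : x ∈ finCone s g) :
    ∃ s' ⊆ s, LinearIndepOn ℝ g s' ∧ x ∈ finCone s' g := by
  classical
  induction s using Finset.strongInduction with
  | H s ih =>
  by_cases hind : LinearIndepOn ℝ g s
  · exact ⟨s, subset_rfl, hind, hx⟩
  obtain ⟨t, ht, rfl⟩ := hx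
  obtain ⟨f, hf, j, hj, hfj⟩ : ∃ f : ι → ℝ, ∑ i ∈ s, f i • g i = 0 ∧ ∃ j ∈ s, 0 < f j := by
    simp only [linearIndepOn_finset_iff, not_forall] at hind
    obtain ⟨f, hf, j, hj, hfj⟩ := hind
    rcases lt_or_gt_of_ne hfj with h | h
    · exact ⟨-f, by simp [neg_smul, Finset.sum_neg_distrib, hf], j, hj, by simpa using h⟩
    · exact ⟨f, hf, j, hj, h⟩
  -- subtract the relation `f` as long as all coefficients stay nonnegative
  obtain ⟨i₀, hi₀, hmin⟩ := Finset.exists_min_image (s.filter (0 < f ·)) (fun i => t i / f i)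
    ⟨j, Finset.mem_filter.2 ⟨hj, hfj⟩⟩
  obtain ⟨hi₀s, hfi₀⟩ := Finset.mem_filter.1 hi₀
  set θ := t i₀ / f i₀
  have hθ : 0 ≤ θ := div_nonneg (ht i₀ hi₀s) hfi₀.le
  have ht' : ∀ i ∈ s, 0 ≤ t i - θ * f i := fun i hi => by
    rcases le_or_gt (f i) 0 with hfi | hfi
    · nlinarith [ht i hi]
    · have := (le_div_iff₀ hfi).1 (hmin i (Finset.mem_filter.2 ⟨hi, hfi⟩))
      linarith
  have hsum : ∑ i ∈ s, t i • g i = ∑ i ∈ s.erase i₀, (t i - θ * f i) • g i := by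
    have hzero : t i₀ - θ * f i₀ = 0 := by simp [θ, div_mul_cancel₀ _ hfi₀.ne']
    rw [Finset.sum_erase _ (by rw [hzero, zero_smul])]
    simp only [sub_smul, Finset.sum_sub_distrib, mul_smul, ← Finset.smul_sum, hf, smul_zero,
      sub_zero]
  obtain ⟨s', hs', hind', hx'⟩ := ih (s.erase i₀) (Finset.erase_ssubset hi₀s)
    ⟨_, fun i hi => ht' i (Finset.mem_of_mem_erase hi), hsum⟩
  exact ⟨s', hs'.trans (Finset.erase_subset _ _), hind', hx'⟩

theorem finCone_eq_image [AddCommMonoid F] [Module ℝ F] (s : Finset ι) (g : ι → F) :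
    finCone s g = Fintype.linearCombination ℝ (fun i : s => g i) '' Ici 0 := by
  classical
  ext x
  simp only [finCone, mem_image, mem_Ici, Pi.le_def, Fintype.linearCombination_apply]
  constructor
  · rintro ⟨t, ht, rfl⟩
    exact ⟨fun i => t i, fun i => ht i i.2, Finset.sum_coe_sort s fun i => t i • g i⟩
  · rintro ⟨t, ht, rfl⟩
    refine ⟨fun i => if h : i ∈ s then t ⟨i, h⟩ else 0, fun i hi => by simpa [hi] using ht _, ?_⟩
    rw [← Finset.sum_coe_sort s]
    simp

variable [NormedAddCommGroup F] [NormedSpace ℝ F]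

theorem isClosed_finCone_of_linearIndepOn {s : Finset ι} {g : ι → F}
    (h : LinearIndepOn ℝ g s) : IsClosed (finCone s g) := by
  rw [finCone_eq_image]
  have hinj := linearIndependent_iff_injective_fintypeLinearCombination.1 h
  exact (LinearMap.isClosedEmbedding_of_injective (LinearMap.ker_eq_bot.2 hinj)).isClosedMap _
    isClosed_Ici

theorem isClosed_finCone (s : Finset ι) (g : ι → F) : IsClosed (finCone s g) := by
  classical
  have : finCone s g = ⋃ (s' : Finset ι)
      (_ : s' ∈ s.powerset.filter fun s' : Finset ι => LinearIndepOn ℝ g (s' : Set ι)),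
      finCone s' g := by
    ext x
    simp only [mem_iUnion, Finset.mem_filter, Finset.mem_powerset, exists_prop]
    constructor
    · intro hx
      obtain ⟨s', hs', hind, hx'⟩ := exists_linearIndepOn_of_mem_finCone hx
      exact ⟨s', ⟨hs', hind⟩, hx'⟩
    · rintro ⟨s', ⟨hs', -⟩, hx'⟩
      exact finCone_mono hs' g hx'
  rw [this]
  exact isClosed_biUnion_finset fun s' hs' =>
    isClosed_finCone_of_linearIndepOn (Finset.mem_filter.1 hs').2

theorem eventually_sum_lt_one_of_linearIndepOn [FiniteDimensional ℝ F] {s : Finset ι}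
    {g : ι → F} (h : LinearIndepOn ℝ g s) :
    ∀ᶠ x in 𝓝 (0 : F), ∀ t : ι → ℝ, x = ∑ i ∈ s, t i • g i → ∑ i ∈ s, t i < 1 := by
  set L := Fintype.linearCombination ℝ (fun i : s => g i)
  have hinj := linearIndependent_iff_injective_fintypeLinearCombination.1 h
  -- the coefficients of `x` in the independent family depend linearly, hence continuously, on `x`
  obtain ⟨P, hP⟩ := L.exists_leftInverse_of_injective (LinearMap.ker_eq_bot.2 hinj)
  have hcont : Continuous fun x => ∑ i, P x i :=
    continuous_finsetSum _ fun i _ => (continuous_apply i).comp P.continuous_of_finiteDimensional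
  have h0 : ∑ i, P 0 i < 1 := by simp
  filter_upwards [(hcont.tendsto 0).eventually (gt_mem_nhds h0)] with x hx t hxt
  have hPx : P x = fun i : s => t i := by
    rw [hxt, ← Finset.sum_coe_sort s, ← Fintype.linearCombination_apply ℝ]
    exact LinearMap.congr_fun hP _
  rw [hPx, Finset.sum_coe_sort s t] at hx
  exact hx

theorem eventually_exists_sum_le_one_of_mem_finCone [FiniteDimensional ℝ F] (s : Finset ι)
    (g : ι → F) :
    ∀ᶠ x in 𝓝 (0 : F), x ∈ finCone s g →
      ∃ t : ι → ℝ, (∀ i ∈ s, 0 ≤ t i) ∧ x = ∑ i ∈ s, t i • g i ∧ ∑ i ∈ s, t i ≤ 1 := by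
  classical
  have hsmall : ∀ᶠ x in 𝓝 (0 : F), ∀ s' ∈ s.powerset, LinearIndepOn ℝ g (s' : Set ι) →
      ∀ t : ι → ℝ, x = ∑ i ∈ s', t i • g i → ∑ i ∈ s', t i < 1 :=
    (eventually_all_finset _).2 fun s' _ =>
      (eventually_imp_distrib_left).2 eventually_sum_lt_one_of_linearIndepOn
  filter_upwards [hsmall] with x hx hmem
  obtain ⟨s', hs', hind, t, ht, rfl⟩ := exists_linearIndepOn_of_mem_finCone hmem
  refine ⟨fun i => if i ∈ s' then t i else 0, fun i _ => ?_, ?_, ?_⟩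
  · dsimp only
    split_ifs with hi
    exacts [ht i hi, le_rfl]
  · simp [ite_smul, Finset.sum_ite_mem, Finset.inter_eq_right.2 hs']
  · simpa [Finset.sum_ite_mem, Finset.inter_eq_right.2 hs'] using
      (hx s' (Finset.mem_powerset.2 hs') hind t rfl).le

end FiniteCone

section Farkas

variable {F ι : Type*} [NormedAddCommGroup F] [InnerProductSpace ℝ F]

theorem exists_inner_lt_of_notMem [CompleteSpace F]
    {C : Set F} (hC : Convex ℝ C) (hCc : IsClosed C) {x : F} (hx : x ∉ C) :
    ∃ y, ∀ p ∈ C, ⟪p, y⟫ < ⟪x, y⟫ := by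
  obtain ⟨f, r, hf, hr⟩ := geometric_hahn_banach_closed_point hC hCc hx
  refine ⟨(InnerProductSpace.toDual ℝ F).symm f, fun p hp => ?_⟩
  rw [real_inner_comm, InnerProductSpace.toDual_symm_apply, real_inner_comm,
    InnerProductSpace.toDual_symm_apply]
  exact (hf p hp).trans hr

/-- Farkas' lemma. -/
theorem polarCone_polarCone_range_subset_finCone [FiniteDimensional ℝ F] [Fintype ι]
    (g : ι → F) : polarCone (polarCone (range g)) ⊆ finCone Finset.univ g := by
  intro x hx
  by_contra hxC
  obtain ⟨y, hy⟩ := exists_inner_lt_of_notMem (convex_finCone _ g) (isClosed_finCone _ g) hxC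
  have hyg : y ∈ polarCone (range g) := by
    rintro _ ⟨i, rfl⟩
    refine nonpos_of_forall_nonneg_mul_lt (d := ⟪x, y⟫) fun t ht => ?_
    rw [real_inner_comm, ← real_inner_smul_left]
    exact hy _ (smul_mem_finCone (Finset.mem_univ i) ht)
  have h0 := hy 0 ⟨0, by simp⟩
  rw [inner_zero_left] at h0
  exact (hx y hyg).not_gt h0

end Farkas

section PolarCone

variable {F : Type*} [NormedAddCommGroup F] [InnerProductSpace ℝ F]

theorem mem_polarCone_range {ι : Type*} {b : ι → F} {w : F} :
    w ∈ polarCone (range b) ↔ ∀ k, ⟪w, b k⟫ ≤ 0 := by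
  simp [polarCone]

theorem isClosed_polarCone (S : Set F) : IsClosed (polarCone S) := by
  have : polarCone S = ⋂ w ∈ S, {u | ⟪u, w⟫ ≤ 0} := by ext; simp [polarCone]
  rw [this]
  exact isClosed_biInter fun w _ => isClosed_le (continuous_id.inner continuous_const)
    continuous_const

theorem zero_mem_polarCone (S : Set F) : (0 : F) ∈ polarCone S := fun _ _ => by simp

theorem smul_mem_polarCone {S : Set F} {w : F} (hw : w ∈ polarCone S) {t : ℝ} (ht : 0 ≤ t) :
    t • w ∈ polarCone S := fun y hy => by
  rw [real_inner_smul_left]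
  exact mul_nonpos_of_nonneg_of_nonpos ht (hw y hy)

theorem add_mem_polarCone {S : Set F} {v w : F} (hv : v ∈ polarCone S) (hw : w ∈ polarCone S) :
    v + w ∈ polarCone S := fun y hy => by
  rw [inner_add_left]
  exact add_nonpos (hv y hy) (hw y hy)

theorem smul_mem_polarCone_iff {S : Set F} {w : F} {t : ℝ} (ht : 0 < t) :
    t • w ∈ polarCone S ↔ w ∈ polarCone S := by
  refine ⟨fun h => ?_, fun h => smul_mem_polarCone h ht.le⟩
  simpa [smul_smul, inv_mul_cancel₀ ht.ne'] using smul_mem_polarCone h (inv_nonneg.2 ht.le)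

theorem mem_ncone_polarCone_iff {S : Set F} {w u : F} (hw : w ∈ polarCone S) :
    u ∈ ncone (polarCone S) w ↔ u ∈ polarCone (polarCone S) ∧ ⟪u, w⟫ = 0 := by
  refine ⟨fun h => ?_, fun ⟨hu, huw⟩ y hy => by rw [inner_sub_right, huw, sub_zero]; exact hu y hy⟩
  have h0 := h 0 (zero_mem_polarCone S)
  have h2 := h ((2 : ℝ) • w) (smul_mem_polarCone hw zero_le_two)
  rw [zero_sub, inner_neg_right] at h0
  rw [two_smul, add_sub_cancel_right] at h2
  have huw : ⟪u, w⟫ = 0 := le_antisymm h2 (by linarith)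
  refine ⟨fun y hy => ?_, huw⟩
  simpa [inner_sub_right, huw] using h y hy

theorem isClosed_graph_ncone_polarCone (S : Set F) :
    IsClosed {p : F × F | p.1 ∈ polarCone S ∧ p.2 ∈ ncone (polarCone S) p.1} := by
  have : {p : F × F | p.1 ∈ polarCone S ∧ p.2 ∈ ncone (polarCone S) p.1} =
      Prod.fst ⁻¹' polarCone S ∩ ⋂ y ∈ polarCone S, {p | ⟪p.2, y - p.1⟫ ≤ 0} := by
    ext; simp [ncone]
  rw [this]
  exact ((isClosed_polarCone S).preimage continuous_fst).inter (isClosed_biInter fun y _ =>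
    isClosed_le (continuous_snd.inner (continuous_const.sub continuous_fst)) continuous_const)

theorem smul_mem_graph_ncone_polarCone {S : Set F} {p : F × F}
    (hp : p.1 ∈ polarCone S ∧ p.2 ∈ ncone (polarCone S) p.1) {t : ℝ} (ht : 0 < t) :
    (t • p).1 ∈ polarCone S ∧ (t • p).2 ∈ ncone (polarCone S) (t • p).1 := by
  obtain ⟨hw, hu⟩ := hp
  rw [mem_ncone_polarCone_iff hw] at hu
  simp only [Prod.smul_fst, Prod.smul_snd]
  refine ⟨smul_mem_polarCone hw ht.le, ?_⟩
  rw [mem_ncone_polarCone_iff (smul_mem_polarCone hw ht.le)]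
  refine ⟨smul_mem_polarCone hu.1 ht.le, ?_⟩
  simp [real_inner_smul_left, real_inner_smul_right, hu.2]

end PolarCone

section TangentCone

variable {G : Type*} [NormedAddCommGroup G] [NormedSpace ℝ G]

theorem btcone_subset_of_eventually {Ω Ω' : Set G} {x y : G}
    (h : ∀ᶠ p in 𝓝 (0 : G), x + p ∈ Ω → y + p ∈ Ω') : btcone Ω x ⊆ btcone Ω' y := by
  rintro w ⟨t, v, ht, ht0, hv, hmem⟩
  have hsmall : Tendsto (fun n => t n • v n) atTop (𝓝 0) := by
    simpa using ht0.smul hv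
  obtain ⟨N, hN⟩ := eventually_atTop.1 (hsmall.eventually h)
  exact ⟨fun n => t (n + N), fun n => v (n + N), fun n => ht _,
    ht0.comp (tendsto_add_atTop_nat N), hv.comp (tendsto_add_atTop_nat N),
    fun n => hN (n + N) (Nat.le_add_left N n) (hmem (n + N))⟩

theorem btcone_eq_of_eventually {Ω C : Set G} {x : G}
    (h : ∀ᶠ p in 𝓝 (0 : G), x + p ∈ Ω ↔ p ∈ C) : btcone Ω x = btcone C 0 :=
  (btcone_subset_of_eventually (h.mono fun p hp => by simpa using hp.1)).antisymm
    (btcone_subset_of_eventually (h.mono fun p hp => by simpa using hp.2))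

theorem btcone_zero_eq_of_isClosed {C : Set G} (hC : IsClosed C)
    (hcone : ∀ p ∈ C, ∀ t : ℝ, 0 < t → t • p ∈ C) : btcone C 0 = C := by
  refine Subset.antisymm ?_ fun w hw => ?_
  · rintro w ⟨t, v, ht, -, hv, hmem⟩
    refine hC.mem_of_tendsto hv (Eventually.of_forall fun n => ?_)
    have := hcone _ (by simpa using hmem n) _ (inv_pos.2 (ht n))
    rwa [smul_smul, inv_mul_cancel₀ (ht n).ne', one_smul] at this
  · exact ⟨fun n => 1 / ((n : ℝ) + 1), fun _ => w, fun n => by positivity,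
      tendsto_one_div_add_atTop_nhds_zero_nat, tendsto_const_nhds,
      fun n => by simpa using hcone w hw _ (by positivity)⟩

end TangentCone

section ConvexFunction

variable {E : Type*} [NormedAddCommGroup E] [InnerProductSpace ℝ E]

theorem subdiff_eq_empty_of_eq_top {f : E → EReal} {x y : E} (hx : f x = ⊤) (hy : f y ≠ ⊤) :
    subdiff f x = ∅ :=
  eq_empty_of_forall_notMem fun l hl => hy (top_le_iff.1 (by simpa [hx] using hl y))

theorem mem_subdiff_iff_eventually {f : E → EReal} (hf : Convex ℝ {p : E × ℝ | f p.1 ≤ p.2})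
    {x l : E} {γ : ℝ} (hx : f x = γ) :
    l ∈ subdiff f x ↔ ∀ᶠ y in 𝓝 x, f x + ⟪l, y - x⟫ ≤ f y := by
  refine ⟨fun h => Eventually.of_forall h, fun h y => ?_⟩
  rw [hx]
  refine EReal.le_of_forall_lt_iff_le.1 fun r hr => ?_
  have hseg : Tendsto (fun t : ℝ => x + t • (y - x)) (𝓝[>] 0) (𝓝 x) := by
    have : Continuous fun t : ℝ => x + t • (y - x) := by fun_prop
    simpa using (this.tendsto 0).mono_left nhdsWithin_le_nhds
  have h01 : ∀ᶠ t in 𝓝[>] (0 : ℝ), t ∈ Ioo 0 1 := Ioo_mem_nhdsGT zero_lt_one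
  obtain ⟨t, ⟨ht0, ht1⟩, hloc⟩ := (h01.and (hseg.eventually h)).exists
  -- convexity of the epigraph along the segment from `(x, γ)` to `(y, r)`
  have hconv := hf (x := (x, γ)) (y := (y, r)) (by simp [hx]) (by simpa using hr.le)
    (sub_nonneg.2 ht1.le) ht0.le (sub_add_cancel 1 t)
  simp only [mem_ofPred_eq, Prod.fst_add, Prod.snd_add, Prod.smul_fst, Prod.smul_snd,
    smul_eq_mul] at hconv
  have hpt : (1 - t) • x + t • y = x + t • (y - x) := by
    rw [smul_sub, sub_smul, one_smul]; abel
  rw [hpt] at hconv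
  rw [add_sub_cancel_left, hx, real_inner_smul_right] at hloc
  have := hloc.trans hconv
  norm_cast at this ⊢
  nlinarith

theorem subderiv_eq_of_eventually {g f : E → EReal} (hf : LowerSemicontinuous f)
    (hsmul : ∀ t : ℝ, 0 < t → ∀ w, f (t • w) = t * f w) {z : E} {γ : ℝ} (hz : g z = γ)
    (hloc : ∀ᶠ y in 𝓝 0, g (z + y) = γ + f y) : subderiv g z = f := by
  funext w
  have hsmall : Tendsto (fun p : ℝ × E => p.1 • p.2) (𝓝[>] 0 ×ˢ 𝓝 w) (𝓝 0) := by
    have : Continuous fun p : ℝ × E => p.1 • p.2 := by fun_prop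
    have := this.tendsto ((0 : ℝ), w)
    rw [nhds_prod_eq, zero_smul] at this
    exact this.mono_left (prod_mono nhdsWithin_le_nhds le_rfl)
  have hq : ∀ᶠ p : ℝ × E in 𝓝[>] 0 ×ˢ 𝓝 w,
      (g (z + p.1 • p.2) - g z) * ((p.1⁻¹ : ℝ) : EReal) = f p.2 := by
    filter_upwards [hsmall.eventually hloc, prod_mem_prod self_mem_nhdsWithin univ_mem]
      with p hp hp0
    rw [hp, hz, hsmul p.1 hp0.1, EReal.coe_add_coe_mul_sub_mul_inv γ hp0.1]
  rw [subderiv, liminf_congr hq, show (fun p : ℝ × E => f p.2) = f ∘ Prod.snd from rfl,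
    liminf_comp, map_snd_prod]
  exact le_antisymm
    (liminf_le_of_frequently_le' (frequently_nhds_iff.2 fun U hU _ => ⟨w, hU, le_rfl⟩))
    (lowerSemicontinuousAt_iff_le_liminf.1 (hf w))

theorem eventually_subdiff_add_eq {g f : E → EReal} (hg : Convex ℝ {p : E × ℝ | g p.1 ≤ p.2})
    (hf : Convex ℝ {p : E × ℝ | f p.1 ≤ p.2}) (hf0 : f 0 = 0) (hfbot : ∀ w, f w ≠ ⊥) {z : E}
    {γ : ℝ} (hloc : ∀ᶠ y in 𝓝 0, g (z + y) = γ + f y) :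
    ∀ᶠ w in 𝓝 0, subdiff g (z + w) = subdiff f w := by
  have hz : g z = γ := by simpa [hf0] using hloc.self_of_nhds
  filter_upwards [hloc.eventually_nhds] with w hw
  have hgw : g (z + w) = γ + f w := hw.self_of_nhds
  induction hfw : f w using EReal.rec with
  | bot => exact absurd hfw (hfbot w)
  | top =>
    rw [subdiff_eq_empty_of_eq_top (by rw [hgw, hfw, EReal.coe_add_top]) (y := z) (by simp [hz]),
      subdiff_eq_empty_of_eq_top hfw (y := 0) (by simp [hf0])]
  | coe r =>
    ext l
    rw [mem_subdiff_iff_eventually hg (by rw [hgw, hfw, ← EReal.coe_add]),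
      mem_subdiff_iff_eventually hf hfw, ← map_add_left_nhds z w, eventually_map]
    refine eventually_congr (hw.mono fun y hy => ?_)
    rw [hy, hgw, add_sub_add_left_eq_sub, add_assoc, EReal.coe_add_le_coe_add_iff]

end ConvexFunction

section PolyhedralSublinear

variable {F ι κ : Type*} [NormedAddCommGroup F] [InnerProductSpace ℝ F]

def maxInner (a : ι → F) (w : F) : ℝ := ⨆ i, ⟪a i, w⟫

theorem maxInner_smul (a : ι → F) {t : ℝ} (ht : 0 ≤ t) (w : F) :
    maxInner a (t • w) = t * maxInner a w := by
  simp only [maxInner, real_inner_smul_right, Real.mul_iSup_of_nonneg ht]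

theorem maxInner_zero (a : ι → F) : maxInner a 0 = 0 := by
  simpa using maxInner_smul a le_rfl 0

section MaxInner

variable [Finite ι] (a : ι → F)

theorem inner_le_maxInner (i : ι) (w : F) : ⟪a i, w⟫ ≤ maxInner a w :=
  le_ciSup (f := fun i => ⟪a i, w⟫) (finite_range _).bddAbove i

theorem maxInner_le_iff [Nonempty ι] {w : F} {c : ℝ} : maxInner a w ≤ c ↔ ∀ i, ⟪a i, w⟫ ≤ c :=
  ciSup_le_iff (finite_range _).bddAbove

theorem exists_inner_eq_maxInner [Nonempty ι] (w : F) : ∃ i, ⟪a i, w⟫ = maxInner a w :=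
  exists_eq_ciSup_of_finite

theorem maxInner_add_le [Nonempty ι] (v w : F) :
    maxInner a (v + w) ≤ maxInner a v + maxInner a w :=
  (maxInner_le_iff a).2 fun i => by
    rw [inner_add_right]
    exact add_le_add (inner_le_maxInner a i v) (inner_le_maxInner a i w)

theorem lowerSemicontinuous_maxInner : LowerSemicontinuous (maxInner a) :=
  lowerSemicontinuous_ciSup (fun _ => (finite_range _).bddAbove)
    fun _ => (continuous_const.inner continuous_id).lowerSemicontinuous

end MaxInner

def finPolyhedron [Fintype ι] [Fintype κ] (a : ι → F) (b : κ → F) : Set F :=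
  Fintype.linearCombination ℝ a '' stdSimplex ℝ ι + finCone Finset.univ b

theorem mem_finPolyhedron_iff [Fintype ι] [Fintype κ] {a : ι → F} {b : κ → F} {x : F} :
    x ∈ finPolyhedron a b ↔ ∃ μ ∈ stdSimplex ℝ ι, ∃ ν : κ → ℝ, (∀ k, 0 ≤ ν k) ∧
      x = ∑ i, μ i • a i + ∑ k, ν k • b k := by
  simp [finPolyhedron, finCone, Set.mem_add, Fintype.linearCombination_apply, eq_comm]

theorem isClosed_finPolyhedron [Fintype ι] [Fintype κ] (a : ι → F) (b : κ → F) :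
    IsClosed (finPolyhedron a b) :=
  (isClosed_finCone _ b).add_left_of_isCompact
    ((isCompact_stdSimplex ℝ ι).image (LinearMap.continuous_of_finiteDimensional _))

theorem convex_finPolyhedron [Fintype ι] [Fintype κ] (a : ι → F) (b : κ → F) :
    Convex ℝ (finPolyhedron a b) :=
  ((convex_stdSimplex ℝ ι).linear_image _).add (convex_finCone _ b)

/-- Farkas' lemma, affine form. -/
theorem mem_finPolyhedron_of_forall_inner_le [Fintype ι] [Nonempty ι] [Fintype κ]
    [CompleteSpace F] {a : ι → F} {b : κ → F} {x : F}
    (hx : ∀ y ∈ polarCone (range b), ⟪x, y⟫ ≤ maxInner a y) : x ∈ finPolyhedron a b := by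
  classical
  by_contra hxP
  obtain ⟨y, hy⟩ :=
    exists_inner_lt_of_notMem (convex_finPolyhedron a b) (isClosed_finPolyhedron a b) hxP
  have hmem : ∀ i, ∀ c ∈ finCone Finset.univ b, a i + c ∈ finPolyhedron a b := fun i c hc =>
    add_mem_add ⟨Pi.single i 1, single_mem_stdSimplex ℝ i, by simp⟩ hc
  have hyb : y ∈ polarCone (range b) := mem_polarCone_range.2 fun k => by
    obtain ⟨i⟩ := ‹Nonempty ι›
    refine nonpos_of_forall_nonneg_mul_lt (d := ⟪x, y⟫ - ⟪a i, y⟫) fun t ht => ?_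
    have := hy _ (hmem i _ (smul_mem_finCone (Finset.mem_univ k) ht))
    rw [inner_add_left, real_inner_smul_left] at this
    rw [real_inner_comm (b k) y]
    linarith
  obtain ⟨i, hi⟩ := exists_inner_eq_maxInner a y
  have := hy _ (hmem i 0 ⟨0, by simp, by simp⟩)
  rw [add_zero, hi] at this
  exact (hx y hyb).not_gt this

open scoped Classical in
def polySublin (a : ι → F) (b : κ → F) (w : F) : EReal :=
  if w ∈ polarCone (range b) then (maxInner a w : EReal) else ⊤

section PolySublin

variable (a : ι → F) (b : κ → F)

theorem polySublin_of_mem {w : F} (hw : w ∈ polarCone (range b)) :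
    polySublin a b w = maxInner a w := if_pos hw

theorem polySublin_of_notMem {w : F} (hw : w ∉ polarCone (range b)) :
    polySublin a b w = ⊤ := if_neg hw

theorem coe_maxInner_le_polySublin (w : F) : (maxInner a w : EReal) ≤ polySublin a b w := by
  unfold polySublin
  split_ifs <;> simp

theorem polySublin_zero : polySublin a b 0 = 0 := by
  simp [polySublin_of_mem a b (zero_mem_polarCone _), maxInner_zero]

theorem polySublin_ne_bot (w : F) : polySublin a b w ≠ ⊥ := by
  unfold polySublin
  split_ifs <;> simp

theorem polySublin_smul {t : ℝ} (ht : 0 < t) (w : F) :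
    polySublin a b (t • w) = t * polySublin a b w := by
  by_cases hw : w ∈ polarCone (range b)
  · rw [polySublin_of_mem a b hw, polySublin_of_mem a b ((smul_mem_polarCone_iff ht).2 hw),
      maxInner_smul a ht.le, EReal.coe_mul]
  · rw [polySublin_of_notMem a b hw, polySublin_of_notMem a b (by rwa [smul_mem_polarCone_iff ht]),
      EReal.coe_mul_top_of_pos ht]

theorem polySublin_le_coe_iff {w : F} {r : ℝ} :
    polySublin a b w ≤ r ↔ w ∈ polarCone (range b) ∧ maxInner a w ≤ r := by
  unfold polySublin
  split_ifs with hw <;> simp [hw]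

theorem lowerSemicontinuous_polySublin [Finite ι] : LowerSemicontinuous (polySublin a b) := by
  refine lowerSemicontinuous_iff.2 fun w => lowerSemicontinuousAt_iff.2 fun r hr => ?_
  by_cases hw : w ∈ polarCone (range b)
  · rw [polySublin_of_mem a b hw] at hr
    have hM := continuous_coe_real_ereal.comp_lowerSemicontinuous (lowerSemicontinuous_maxInner a)
      fun _ _ h => EReal.coe_le_coe_iff.2 h
    filter_upwards [lowerSemicontinuousAt_iff.1 (lowerSemicontinuous_iff.1 hM w) r hr] with w' hw'
    exact hw'.trans_le (coe_maxInner_le_polySublin a b w')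
  · filter_upwards [(isClosed_polarCone _).isOpen_compl.mem_nhds hw] with w' hw'
    rw [polySublin_of_notMem a b hw']
    exact hr.trans_le le_top

theorem mem_subdiff_polySublin_iff_of_mem {w l : F} (hw : w ∈ polarCone (range b)) :
    l ∈ subdiff (polySublin a b) w ↔
      ∀ x ∈ polarCone (range b), maxInner a w + ⟪l, x - w⟫ ≤ maxInner a x := by
  simp only [subdiff, polySublin_of_mem a b hw]
  refine ⟨fun h x hx => ?_, fun h x => ?_⟩
  · simpa [polySublin_of_mem a b hx, ← EReal.coe_add] using h x
  · by_cases hx : x ∈ polarCone (range b)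
    · simpa [polySublin_of_mem a b hx, ← EReal.coe_add] using h x hx
    · simp [polySublin_of_notMem a b hx]

theorem mem_subdiff_polySublin_zero_iff {l : F} :
    l ∈ subdiff (polySublin a b) 0 ↔ ∀ y ∈ polarCone (range b), ⟪l, y⟫ ≤ maxInner a y := by
  simp [mem_subdiff_polySublin_iff_of_mem a b (zero_mem_polarCone _), maxInner_zero]

theorem mem_subdiff_polySublin_iff [Finite ι] [Nonempty ι] {w l : F} :
    l ∈ subdiff (polySublin a b) w ↔
      l ∈ subdiff (polySublin a b) 0 ∧ w ∈ polarCone (range b) ∧ maxInner a w ≤ ⟪l, w⟫ := by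
  rw [mem_subdiff_polySublin_zero_iff]
  by_cases hw : w ∈ polarCone (range b)
  swap
  · simp only [hw, false_and, and_false, iff_false]
    intro h
    have := h 0
    rw [polySublin_of_notMem a b hw, polySublin_zero, EReal.top_add_coe] at this
    exact EReal.zero_ne_top (top_le_iff.1 this)
  rw [mem_subdiff_polySublin_iff_of_mem a b hw]
  constructor
  · intro h
    have h0 := h 0 (zero_mem_polarCone _)
    rw [maxInner_zero, zero_sub, inner_neg_right] at h0
    refine ⟨fun y hy => ?_, hw, by linarith⟩
    have := h (w + y) (add_mem_polarCone hw hy)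
    rw [add_sub_cancel_left] at this
    linarith [maxInner_add_le a w y]
  · rintro ⟨h, -, hwl⟩ x hx
    have := h x hx
    rw [inner_sub_right]
    linarith

theorem convex_epigraph_polySublin [Finite ι] [Nonempty ι] :
    Convex ℝ {p : F × ℝ | polySublin a b p.1 ≤ p.2} := by
  have : {p : F × ℝ | polySublin a b p.1 ≤ p.2} =
      {p | p.1 ∈ polarCone (range b) ∧ maxInner a p.1 ≤ p.2} := by
    ext; exact polySublin_le_coe_iff a b
  rw [this]
  rintro ⟨w, r⟩ ⟨hw, hwr⟩ ⟨w', r'⟩ ⟨hw', hwr'⟩ s t hs ht -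
  refine ⟨add_mem_polarCone (smul_mem_polarCone hw hs) (smul_mem_polarCone hw' ht), ?_⟩
  calc maxInner a (s • w + t • w') ≤ maxInner a (s • w) + maxInner a (t • w') :=
        maxInner_add_le a _ _
    _ = s * maxInner a w + t * maxInner a w' := by rw [maxInner_smul a hs, maxInner_smul a ht]
    _ ≤ s * r + t * r' := by gcongr

def polyCriticalCone (a : ι → F) (b : κ → F) (l : F) : Set F :=
  polarCone (range (Sum.elim b fun i => a i - l))

theorem mem_polyCriticalCone_iff [Finite ι] [Nonempty ι] {l w : F} :
    w ∈ polyCriticalCone a b l ↔ w ∈ polarCone (range b) ∧ maxInner a w ≤ ⟪l, w⟫ := by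
  rw [polyCriticalCone, mem_polarCone_range, mem_polarCone_range, maxInner_le_iff]
  simp [Sum.forall, inner_sub_right, real_inner_comm]

theorem polySublin_eq_inner_iff [Finite ι] [Nonempty ι] {l : F}
    (hl : l ∈ subdiff (polySublin a b) 0) (w : F) :
    polySublin a b w = ⟪l, w⟫ ↔ w ∈ polyCriticalCone a b l := by
  rw [mem_polyCriticalCone_iff]
  by_cases hw : w ∈ polarCone (range b)
  · rw [polySublin_of_mem a b hw, EReal.coe_eq_coe_iff]
    have := (mem_subdiff_polySublin_zero_iff a b).1 hl w hw
    exact ⟨fun h => ⟨hw, h.le⟩, fun h => le_antisymm h.2 this⟩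
  · simp [polySublin_of_notMem a b hw, hw]

open scoped Classical in
theorem mem_face_of_inner_eq [Fintype ι] [Fintype κ] {w x : F} (hw : w ∈ polarCone (range b))
    (hx : x ∈ finPolyhedron a b) (hxw : ⟪x, w⟫ = maxInner a w) :
    x ∈ finPolyhedron (fun i : {i | ⟪a i, w⟫ = maxInner a w}.toFinset => a i)
      (fun k : {k | ⟪w, b k⟫ = 0}.toFinset => b k) := by
  obtain ⟨μ, ⟨hμ0, hμ1⟩, ν, hν0, rfl⟩ := mem_finPolyhedron_iff.1 hx
  -- complementary slackness: only active pieces and tight constraints carry weight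
  have hμ : ∀ i, 0 ≤ μ i * (maxInner a w - ⟪a i, w⟫) := fun i =>
    mul_nonneg (hμ0 i) (sub_nonneg.2 (inner_le_maxInner a i w))
  have hν : ∀ k, 0 ≤ ν k * -⟪w, b k⟫ := fun k =>
    mul_nonneg (hν0 k) (neg_nonneg.2 (mem_polarCone_range.1 hw k))
  have hslack : ∑ i, μ i * (maxInner a w - ⟪a i, w⟫) + ∑ k, ν k * -⟪w, b k⟫ = 0 := by
    have hb : ∀ k, ⟪b k, w⟫ = ⟪w, b k⟫ := fun k => real_inner_comm _ _
    simp only [inner_add_left, sum_inner, real_inner_smul_left, hb] at hxw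
    simp only [mul_sub, mul_neg, Finset.sum_sub_distrib, Finset.sum_neg_distrib,
      ← Finset.sum_mul, hμ1, one_mul]
    linarith
  rw [add_eq_zero_iff_of_nonneg (Finset.sum_nonneg fun i _ => hμ i)
    (Finset.sum_nonneg fun k _ => hν k), Finset.sum_eq_zero_iff_of_nonneg fun i _ => hμ i,
    Finset.sum_eq_zero_iff_of_nonneg fun k _ => hν k] at hslack
  have hμA : ∀ i ∉ {i | ⟪a i, w⟫ = maxInner a w}.toFinset, μ i = 0 := fun i hi => by
    simp only [mem_toFinset, mem_ofPred_eq] at hi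
    simpa [sub_eq_zero, Ne.symm hi] using hslack.1 i (Finset.mem_univ i)
  have hνB : ∀ k ∉ {k | ⟪w, b k⟫ = 0}.toFinset, ν k = 0 := fun k hk => by
    simp only [mem_toFinset, mem_ofPred_eq] at hk
    simpa [hk] using hslack.2 k (Finset.mem_univ k)
  refine mem_finPolyhedron_iff.2 ⟨fun i => μ i, ⟨fun i => hμ0 i, ?_⟩, fun k => ν k,
    fun k => hν0 k, ?_⟩
  · rw [sum_coe_sort_of_forall_notMem _ hμA, hμ1]
  · beta_reduce
    rw [sum_coe_sort_of_forall_notMem _ (f := fun i => μ i • a i) fun i hi => by simp [hμA i hi],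
      sum_coe_sort_of_forall_notMem _ (f := fun k => ν k • b k) fun k hk => by simp [hνB k hk]]

theorem inner_eq_of_mem_face [Fintype ι] [Fintype κ] {w x : F} {A : Finset ι} {B : Finset κ}
    (hA : ∀ i ∈ A, ⟪a i, w⟫ = maxInner a w) (hB : ∀ k ∈ B, ⟪w, b k⟫ = 0)
    (hx : x ∈ finPolyhedron (fun i : A => a i) (fun k : B => b k)) : ⟪x, w⟫ = maxInner a w := by
  obtain ⟨μ, ⟨-, hμ⟩, ν, -, rfl⟩ := mem_finPolyhedron_iff.1 hx
  have h1 : ∑ i : A, μ i * ⟪a i, w⟫ = maxInner a w := by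
    rw [Finset.sum_congr rfl fun i _ => by rw [hA i i.2], ← Finset.sum_mul, hμ, one_mul]
  have h2 : ∑ k : B, ν k * ⟪b k, w⟫ = 0 :=
    Finset.sum_eq_zero fun k _ => by rw [real_inner_comm, hB k k.2, mul_zero]
  simp only [inner_add_left, sum_inner, real_inner_smul_left, h1, h2, add_zero]

theorem eventually_inner_eq_maxInner [Fintype ι] [Fintype κ] (l : F) :
    ∀ᶠ u in 𝓝 (0 : F), ∀ w ∈ polarCone (range b), l + u ∈ finPolyhedron a b →
      ⟪l + u, w⟫ = maxInner a w → ⟪l, w⟫ = maxInner a w := by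
  classical
  -- a polyhedron has finitely many faces, each of them closed
  have : ∀ᶠ u in 𝓝 (0 : F), ∀ (A : Finset ι) (B : Finset κ),
      l + u ∈ finPolyhedron (fun i : A => a i) (fun k : B => b k) →
        l ∈ finPolyhedron (fun i : A => a i) (fun k : B => b k) :=
    eventually_all.2 fun A => eventually_all.2 fun B =>
      eventually_mem_of_add_mem (isClosed_finPolyhedron _ _) l
  filter_upwards [this] with u hu w hw hmem heq
  exact inner_eq_of_mem_face a b (by simp) (by simp) (hu _ _ (mem_face_of_inner_eq a b hw hmem heq))

theorem eventually_add_mem_subdiff_polySublin_zero [Fintype ι] [Nonempty ι] [Fintype κ]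
    [FiniteDimensional ℝ F] {l : F} (hl : l ∈ subdiff (polySublin a b) 0) :
    ∀ᶠ u in 𝓝 (0 : F), u ∈ polarCone (polyCriticalCone a b l) →
      l + u ∈ subdiff (polySublin a b) 0 := by
  set G : κ ⊕ ι → F := Sum.elim b fun i => a i - l
  filter_upwards [eventually_exists_sum_le_one_of_mem_finCone Finset.univ G] with u hu hpol
  obtain ⟨t, ht, rfl, hsum⟩ := hu (polarCone_polarCone_range_subset_finCone G hpol)
  rw [mem_subdiff_polySublin_zero_iff] at hl ⊢
  intro y hy
  have hgap : 0 ≤ maxInner a y - ⟪l, y⟫ := sub_nonneg.2 (hl y hy)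
  have hgen : ∀ j, ⟪G j, y⟫ ≤ maxInner a y - ⟪l, y⟫ := by
    rintro (k | i)
    · change ⟪b k, y⟫ ≤ _
      rw [real_inner_comm]
      exact (mem_polarCone_range.1 hy k).trans hgap
    · change ⟪a i - l, y⟫ ≤ _
      rw [inner_sub_left]
      linarith [inner_le_maxInner a i y]
  calc ⟪l + ∑ j, t j • G j, y⟫ = ⟪l, y⟫ + ∑ j, t j * ⟪G j, y⟫ := by
        simp [inner_add_left, sum_inner, real_inner_smul_left]
    _ ≤ ⟪l, y⟫ + (∑ j, t j) * (maxInner a y - ⟪l, y⟫) := by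
        rw [Finset.sum_mul]
        gcongr with j
        exacts [ht j (Finset.mem_univ j), hgen j]
    _ ≤ ⟪l, y⟫ + 1 * (maxInner a y - ⟪l, y⟫) := by gcongr
    _ = maxInner a y := by ring

/-- The reduction lemma for `polySublin`. -/
theorem eventually_add_mem_subdiff_polySublin_iff [Fintype ι] [Nonempty ι] [Fintype κ]
    [FiniteDimensional ℝ F] {l : F} (hl : l ∈ subdiff (polySublin a b) 0) :
    ∀ᶠ u in 𝓝 (0 : F), ∀ w, l + u ∈ subdiff (polySublin a b) w ↔
      w ∈ polyCriticalCone a b l ∧ u ∈ ncone (polyCriticalCone a b l) w := by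
  filter_upwards [eventually_inner_eq_maxInner a b l,
    eventually_add_mem_subdiff_polySublin_zero a b hl] with u hface hsmall w
  rw [mem_subdiff_polySublin_iff]
  constructor
  · rintro ⟨hQ, hw, hMw⟩
    rw [mem_subdiff_polySublin_zero_iff] at hQ
    have hluw := le_antisymm (hQ w hw) hMw
    have hlw := hface w hw (mem_finPolyhedron_of_forall_inner_le hQ) hluw
    have hwK := (mem_polyCriticalCone_iff a b).2 ⟨hw, hlw.ge⟩
    refine ⟨hwK, (mem_ncone_polarCone_iff hwK).2 ⟨fun y hy => ?_, ?_⟩⟩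
    · obtain ⟨hyT, hyl⟩ := (mem_polyCriticalCone_iff a b).1 hy
      have := hQ y hyT
      rw [inner_add_left] at this
      linarith
    · rw [inner_add_left] at hluw
      linarith
  · rintro ⟨hwK, hu⟩
    obtain ⟨hpol, huw⟩ := (mem_ncone_polarCone_iff hwK).1 hu
    obtain ⟨hw, hMw⟩ := (mem_polyCriticalCone_iff a b).1 hwK
    exact ⟨hsmall hpol, hw, by rwa [inner_add_left, huw, add_zero]⟩

end PolySublin

end PolyhedralSublinear

section PolyhedralFunction

variable {E : Type*} [NormedAddCommGroup E] [InnerProductSpace ℝ E]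

theorem IsPolyhedralSet.convex {V : Type*} [AddCommGroup V] [Module ℝ V] {C : Set V}
    (hC : IsPolyhedralSet C) : Convex ℝ C := by
  obtain ⟨s, b, β, rfl⟩ := hC
  simp only [ofPred_forall]
  exact convex_iInter fun i => convex_halfSpace_le (b i).isLinear (β i)

theorem IsPolyhedralFn.exists_le_coe_iff [FiniteDimensional ℝ E] {g : E → EReal}
    (hg : IsPolyhedralFn g) :
    ∃ (n : ℕ) (J J₀ : Finset (Fin n)) (c v : Fin n → E) (d β : Fin n → ℝ),
      ∀ x (r : ℝ), g x ≤ r ↔ (∀ k ∈ J₀, ⟪x, v k⟫ ≤ β k) ∧ ∀ i ∈ J, ⟪c i, x⟫ + d i ≤ r := by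
  classical
  obtain ⟨⟨z₀, hz₀⟩, -, n, ℓ, β, hepi⟩ := hg
  let v : Fin n → E := fun i => (InnerProductSpace.toDual ℝ E).symm
    (LinearMap.toContinuousLinearMap ((ℓ i).comp (LinearMap.inl ℝ E ℝ)))
  set σ : Fin n → ℝ := fun i => ℓ i (0, 1)
  have hℓ : ∀ i x r, ℓ i (x, r) = ⟪x, v i⟫ + r * σ i := fun i x r => by
    rw [real_inner_comm, InnerProductSpace.toDual_symm_apply,
      show ((x, r) : E × ℝ) = (x, 0) + r • ((0 : E), (1 : ℝ)) by simp, map_add, map_smul]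
    rfl
  have hsub : ∀ x (r : ℝ), g x ≤ r ↔ ∀ i, ⟪x, v i⟫ + r * σ i ≤ β i := fun x r => by
    simpa [hℓ] using Set.ext_iff.1 hepi (x, r)
  -- `g z₀` is finite, so every constraint allows arbitrarily large values
  have hσ : ∀ i, σ i ≤ 0 := fun i => by
    let r₀ := (g z₀).toReal
    refine nonpos_of_forall_nonneg_mul_lt (d := β i - ⟪z₀, v i⟫ - r₀ * σ i + 1) fun t ht => ?_
    have := (hsub z₀ (r₀ + t)).1 ((EReal.le_coe_toReal hz₀).trans
      (EReal.coe_le_coe_iff.2 (le_add_of_nonneg_right ht))) i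
    linarith
  have hpiece : ∀ i, σ i < 0 → ∀ x (r : ℝ),
      (⟪x, v i⟫ + r * σ i ≤ β i ↔ ⟪(-(σ i)⁻¹) • v i, x⟫ + β i / σ i ≤ r) := fun i hi x r => by
    have : ⟪(-(σ i)⁻¹) • v i, x⟫ + β i / σ i = (β i - ⟪x, v i⟫) / σ i := by
      rw [real_inner_smul_left, real_inner_comm]
      field_simp
      ring
    rw [this, div_le_iff_of_neg hi]
    constructor <;> intro <;> linarith
  refine ⟨n, Finset.univ.filter (σ · < 0), Finset.univ.filter (σ · = 0),
    fun i => (-(σ i)⁻¹) • v i, v, fun i => β i / σ i, β, fun x r => ?_⟩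
  simp only [Finset.mem_filter, Finset.mem_univ, true_and, hsub]
  constructor
  · exact fun h => ⟨fun k hk => by simpa [hk] using h k, fun i hi => (hpiece i hi x r).1 (h i)⟩
  · rintro ⟨h₀, h⟩ i
    rcases (hσ i).lt_or_eq with hi | hi
    · exact (hpiece i hi x r).2 (h i hi)
    · simpa [hi] using h₀ i hi

theorem eventually_forall_inner_le_iff {ι : Type*} (J₀ : Finset ι) (v : ι → E) (β : ι → ℝ)
    {z : E} (hz : ∀ k ∈ J₀, ⟪z, v k⟫ ≤ β k) :
    ∀ᶠ y in 𝓝 0, (∀ k ∈ J₀, ⟪z + y, v k⟫ ≤ β k) ↔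
      ∀ k ∈ J₀.filter fun k => ⟪z, v k⟫ = β k, ⟪y, v k⟫ ≤ 0 := by
  classical
  have hslack : ∀ᶠ y in 𝓝 (0 : E), ∀ k ∈ J₀, ⟪z, v k⟫ ≠ β k → ⟪z + y, v k⟫ ≤ β k :=
    (eventually_all_finset J₀).2 fun k hk => by
      by_cases h : ⟪z, v k⟫ = β k
      · exact Eventually.of_forall fun _ h' => absurd h h'
      have hcont : Continuous fun y => ⟪z + y, v k⟫ := by fun_prop
      filter_upwards [hcont.continuousAt.eventually_lt continuousAt_const
        (by simpa using lt_of_le_of_ne (hz k hk) h)] with y hy _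
      exact hy.le
  filter_upwards [hslack] with y hy
  simp only [Finset.mem_filter, and_imp]
  constructor
  · intro h k hk hkz
    have := h k hk
    rw [inner_add_left] at this
    linarith
  · intro h k hk
    by_cases hkz : ⟪z, v k⟫ = β k
    · rw [inner_add_left]
      linarith [h k hk hkz]
    · exact hy k hk hkz

theorem eventually_forall_affine_le_iff {ι : Type*} {J : Finset ι} (hJ : J.Nonempty)
    (c : ι → E) (d : ι → ℝ) (z : E) :
    ∀ᶠ y in 𝓝 0, ∀ r : ℝ, (∀ i ∈ J, ⟪c i, z + y⟫ + d i ≤ r) ↔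
      ∀ i ∈ J.filter (fun i => ⟪c i, z⟫ + d i = J.sup' hJ fun i => ⟪c i, z⟫ + d i),
        (J.sup' hJ fun i => ⟪c i, z⟫ + d i) + ⟪c i, y⟫ ≤ r := by
  classical
  set γ := J.sup' hJ fun i => ⟪c i, z⟫ + d i
  obtain ⟨i₀, hi₀, hγ⟩ := Finset.exists_mem_eq_sup' hJ fun i => ⟪c i, z⟫ + d i
  -- near `z`, the inactive pieces stay below the active piece `i₀`
  have hslack : ∀ᶠ y in 𝓝 (0 : E), ∀ i ∈ J, ⟪c i, z⟫ + d i ≠ γ →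
      ⟪c i, z + y⟫ + d i ≤ γ + ⟪c i₀, y⟫ :=
    (eventually_all_finset J).2 fun i hi => by
      by_cases h : ⟪c i, z⟫ + d i = γ
      · exact Eventually.of_forall fun _ h' => absurd h h'
      have hlt : ⟪c i, z⟫ + d i < γ :=
        lt_of_le_of_ne (Finset.le_sup' (fun i => ⟪c i, z⟫ + d i) hi) h
      have h₁ : Continuous fun y => ⟪c i, z + y⟫ + d i := by fun_prop
      have h₂ : Continuous fun y => γ + ⟪c i₀, y⟫ := by fun_prop
      filter_upwards [h₁.continuousAt.eventually_lt h₂.continuousAt (by simpa using hlt)]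
        with y hy _
      exact hy.le
  filter_upwards [hslack] with y hy r
  simp only [Finset.mem_filter, and_imp]
  have hact : ∀ i, ⟪c i, z⟫ + d i = γ → ⟪c i, z + y⟫ + d i = γ + ⟪c i, y⟫ := fun i h => by
    rw [inner_add_right]
    linarith
  constructor
  · intro h i hi hiγ
    rw [← hact i hiγ]
    exact h i hi
  · intro h i hi
    by_cases hiγ : ⟪c i, z⟫ + d i = γ
    · rw [hact i hiγ]
      exact h i hi hiγ
    · exact (hy i hi hiγ).trans (h i₀ hi₀ hγ.symm)

theorem exists_eventually_eq_add_polySublin_of_le_coe_iff {ι : Type*} {g : E → EReal}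
    {J J₀ : Finset ι} {c v : ι → E} {d β : ι → ℝ}
    (hg : ∀ x (r : ℝ), g x ≤ r ↔ (∀ k ∈ J₀, ⟪x, v k⟫ ≤ β k) ∧ ∀ i ∈ J, ⟪c i, x⟫ + d i ≤ r)
    {z : E} (hz : g z ≠ ⊤) (hz' : g z ≠ ⊥) :
    ∃ (A B : Finset ι) (_ : A.Nonempty) (γ : ℝ),
      ∀ᶠ y in 𝓝 0, g (z + y) = γ + polySublin (fun i : A => c i) (fun k : B => v k) y := by
  classical
  have hzD := ((hg z _).1 (EReal.le_coe_toReal hz)).1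
  have hJ : J.Nonempty := by
    rw [Finset.nonempty_iff_ne_empty]
    rintro rfl
    refine hz' ((EReal.eq_bot_iff_forall_lt _).2 fun r => ?_)
    exact ((hg z (r - 1)).2 ⟨hzD, by simp⟩).trans_lt (EReal.coe_lt_coe_iff.2 (sub_one_lt r))
  set γ := J.sup' hJ fun i => ⟪c i, z⟫ + d i
  obtain ⟨i₀, hi₀, hγ⟩ := Finset.exists_mem_eq_sup' hJ fun i => ⟪c i, z⟫ + d i
  set A := J.filter fun i => ⟪c i, z⟫ + d i = γ
  have hA : A.Nonempty := ⟨i₀, Finset.mem_filter.2 ⟨hi₀, hγ.symm⟩⟩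
  have := hA.to_subtype
  refine ⟨A, J₀.filter fun k => ⟪z, v k⟫ = β k, hA, γ, ?_⟩
  filter_upwards [eventually_forall_inner_le_iff J₀ v β hzD,
    eventually_forall_affine_le_iff hJ c d z] with y hD hval
  refine EReal.eq_of_forall_le_coe_iff_s10 fun r => ?_
  rw [hg, hD, hval, show (r : EReal) = γ + (r - γ : ℝ) by rw [← EReal.coe_add, add_sub_cancel],
    EReal.coe_add_le_coe_add_iff, polySublin_le_coe_iff, mem_polarCone_range, maxInner_le_iff]
  simp only [Subtype.forall, le_sub_iff_add_le']
  rfl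

theorem IsPolyhedralFn.exists_eventually_eq_add_polySublin [FiniteDimensional ℝ E]
    {g : E → EReal} (hg : IsPolyhedralFn g) {z : E} (hz : g z ≠ ⊤) :
    ∃ (ι κ : Type) (_ : Fintype ι) (_ : Nonempty ι) (_ : Fintype κ) (a : ι → E) (b : κ → E)
      (γ : ℝ), ∀ᶠ y in 𝓝 0, g (z + y) = γ + polySublin a b y := by
  obtain ⟨n, J, J₀, c, v, d, β, hsub⟩ := hg.exists_le_coe_iff
  obtain ⟨A, B, hA, γ, hloc⟩ := exists_eventually_eq_add_polySublin_of_le_coe_iff hsub hz (hg.2.1 z)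
  exact ⟨A, B, inferInstance, hA.to_subtype, inferInstance, _, _, γ, hloc⟩

end PolyhedralFunction

/-- the tangent cone to `gph ∂g` at `(zb,lb)` is the graph of the
normal cone mapping of the critical cone (graphical derivative formula). -/
theorem stmt10 {m : ℕ} (g : EuclideanSpace ℝ (Fin m) → EReal) (hg : IsPolyhedralFn g)
    (zb lb : EuclideanSpace ℝ (Fin m)) (hl : lb ∈ subdiff g zb) :
    btcone {p : EuclideanSpace ℝ (Fin m) × EuclideanSpace ℝ (Fin m) | p.2 ∈ subdiff g p.1}
        (zb, lb) =
      {p : EuclideanSpace ℝ (Fin m) × EuclideanSpace ℝ (Fin m) |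
        p.1 ∈ Kcone g zb lb ∧ p.2 ∈ ncone (Kcone g zb lb) p.1} := by
  obtain ⟨z₀, hz₀⟩ := hg.1
  have hzb : g zb ≠ ⊤ := fun h => by simp [subdiff_eq_empty_of_eq_top h hz₀] at hl
  obtain ⟨ι, κ, _, _, _, a, b, γ, hloc⟩ := hg.exists_eventually_eq_add_polySublin hzb
  have hsub := eventually_subdiff_add_eq hg.2.2.convex (convex_epigraph_polySublin a b)
    (polySublin_zero a b) (polySublin_ne_bot a b) hloc
  have hl0 : lb ∈ subdiff (polySublin a b) 0 := by
    simpa [← hsub.self_of_nhds] using hl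
  have hK : Kcone g zb lb = polyCriticalCone a b lb := by
    have hgz : g zb = γ := by simpa [polySublin_zero] using hloc.self_of_nhds
    ext w
    rw [Kcone, mem_ofPred_eq, subderiv_eq_of_eventually (lowerSemicontinuous_polySublin a b)
      (fun t ht => polySublin_smul a b ht) hgz hloc, polySublin_eq_inner_iff a b hl0]
  rw [hK, btcone_eq_of_eventually (C := {p | p.1 ∈ polyCriticalCone a b lb ∧
    p.2 ∈ ncone (polyCriticalCone a b lb) p.1})]
  · exact btcone_zero_eq_of_isClosed (isClosed_graph_ncone_polarCone _)
      fun p hp t ht => smul_mem_graph_ncone_polarCone hp ht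
  · rw [← Prod.mk_zero_zero, nhds_prod_eq]
    filter_upwards [hsub.prod_mk (eventually_add_mem_subdiff_polySublin_iff a b hl0)]
      with ⟨w, u⟩ ⟨hw, hu⟩
    simp only [Prod.fst_add, Prod.snd_add, hw]
    exact hu w
end
end
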